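/- arXiv:2212.08152 — 8 statements merged into one kernel-verified Lean document; each statement's English description precedes it below -/
import Mathlib

section
/- (Small cycle estimate) Let G be a finite simple graph which is connected and remains connected after deleting any set of at most two edges, with first Betti number b ≥ 2, and suppose G contains a cycle of length g. Let h be an integer with 1 ≤ h ≤ min(g, b−1), and suppose S > 0 is a real number such that every finite simple graph with first Betti number at least b−h, equipped with any probability edge weighting, contains a cycle of weight at most S. Then for every probability edge weighting λ of G there exists a cycle C in G with λ(C) ≤ (g·S)/(h·S + g), i.e. λ(C)⁻¹ ≥ h/g + 1/S. -/
/-!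
Let `C` be the given cycle of length `g` and let `D` consist of the `h` heaviest edges of `C`,
so that `λ(D) ≥ (h/g) λ(C)`. Deleting `D` lowers the first Betti number by at most `h`, so the
hypothesis applied to `G \ D` with the renormalized weighting gives a cycle `C'` of `G` with
`λ(C') ≤ S (1 - λ(D))`. The weighted mean of `λ(C)` and `S (1 - λ(D))` with weights `h S` and
`g` is at most `g S / (h S + g)`, hence so is the lighter of `C` and `C'`.
-/

attribute [local instance] Classical.propDecidable

namespace Finset

/-- Discarding a lightest element one at a time never lowers the average weight. -/
theorem exists_subset_card_eq_mul_sum_le {α : Type*} (f : α → ℝ) (s : Finset α) {h : ℕ}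
    (hh : h ≤ #s) : ∃ D ⊆ s, #D = h ∧ h * ∑ x ∈ s, f x ≤ #s * ∑ x ∈ D, f x := by
  induction s using Finset.strongInduction with
  | H s ih =>
    obtain hs | hs := hh.eq_or_lt
    · exact ⟨s, subset_rfl, hs.symm, by rw [hs]⟩
    obtain ⟨m, hm, hmin⟩ := s.exists_min_image f (card_pos.mp (h.zero_le.trans_lt hs))
    have hcard : #(s.erase m) + 1 = #s := card_erase_add_one hm
    obtain ⟨D, hDs, hD, hsum⟩ := ih _ (erase_ssubset hm) (by omega)
    refine ⟨D, hDs.trans (erase_subset m s), hD, ?_⟩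
    have hmD : h * f m ≤ ∑ x ∈ D, f x := by
      simpa [hD] using card_nsmul_le_sum D f (f m) fun x hx ↦ hmin x (erase_subset m s (hDs hx))
    rw [← add_sum_erase s f hm, ← hcard]
    push_cast at hsum ⊢
    nlinarith

end Finset

open Finset

theorem min_le_mul_div_add_of_mul_le_mul {W t S g h : ℝ} (hS : 0 ≤ S) (hg : 0 < g) (hh : 0 ≤ h)
    (hWt : h * W ≤ g * t) : min W (S * (1 - t)) ≤ g * S / (h * S + g) := by
  rw [le_div_iff₀ (by positivity)]
  nlinarith [min_le_left W (S * (1 - t)), min_le_right W (S * (1 - t)), mul_nonneg hh hS]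

namespace SimpleGraph

variable {V : Type*} (G : SimpleGraph V) [Fintype G.edgeSet]

theorem Walk.edges_toFinset_subset_edgeFinset {u v : V} (w : G.Walk u v) :
    w.edges.toFinset ⊆ G.edgeFinset := fun _ he ↦
  G.mem_edgeFinset.mpr (w.edges_subset_edgeSet (List.mem_toFinset.mp he))

/-- A weighting of total mass zero is handled through the uniform probability weighting. -/
theorem exists_isCycle_sum_le_mul_sum (hE : G.edgeFinset.Nonempty) {S : ℝ}
    (hsys : ∀ lam : Sym2 V → ℝ, (∀ e ∈ G.edgeFinset, 0 ≤ lam e) →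
      ∑ e ∈ G.edgeFinset, lam e = 1 →
      ∃ (x : V) (w : G.Walk x x), w.IsCycle ∧ ∑ e ∈ w.edges.toFinset, lam e ≤ S)
    (μ : Sym2 V → ℝ) (hμ : ∀ e ∈ G.edgeFinset, 0 ≤ μ e) :
    ∃ (x : V) (w : G.Walk x x), w.IsCycle ∧
      ∑ e ∈ w.edges.toFinset, μ e ≤ S * ∑ e ∈ G.edgeFinset, μ e := by
  obtain hM | hM := (sum_nonneg hμ).eq_or_lt
  · obtain ⟨x, w, hw, -⟩ := hsys (fun _ ↦ (#G.edgeFinset : ℝ)⁻¹) (fun _ _ ↦ by positivity)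
      (by simp [hE.card_pos.ne'])
    refine ⟨x, w, hw, (sum_le_sum_of_subset_of_nonneg w.edges_toFinset_subset_edgeFinset
      fun e he _ ↦ hμ e he).trans ?_⟩
    rw [← hM, mul_zero]
  · obtain ⟨x, w, hw, hwS⟩ := hsys (fun e ↦ μ e / ∑ e ∈ G.edgeFinset, μ e)
      (fun e he ↦ div_nonneg (hμ e he) hM.le) (by rw [← sum_div, div_self hM.ne'])
    rw [← sum_div, div_le_iff₀ hM] at hwS
    exact ⟨x, w, hw, by linarith⟩

variable [Fintype V]

omit [Fintype G.edgeSet] in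
theorem card_connectedComponent_le_card : Nat.card G.ConnectedComponent ≤ Fintype.card V :=
  Nat.card_eq_fintype_card (α := V) ▸ Nat.card_le_card_of_surjective _ Quot.mk_surjective

theorem edgeFinset_nonempty_of_add_card_connectedComponent_eq {b : ℕ} (hb : 0 < b)
    (hβ : #G.edgeFinset + Nat.card G.ConnectedComponent = Fintype.card V + b) :
    G.edgeFinset.Nonempty := by
  have := G.card_connectedComponent_le_card
  rw [← card_pos]
  omega

theorem exists_add_card_connectedComponent_eq_of_le {G' : SimpleGraph V} [Fintype G'.edgeSet]
    (hle : G' ≤ G) {b k : ℕ} (hE : #G.edgeFinset ≤ #G'.edgeFinset + k) (hkb : k ≤ b)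
    (hβ : #G.edgeFinset + Nat.card G.ConnectedComponent = Fintype.card V + b) :
    ∃ b', #G'.edgeFinset + Nat.card G'.ConnectedComponent = Fintype.card V + b' ∧ b - k ≤ b' := by
  have hc := ConnectedComponent.card_le_card_of_le hle
  exact ⟨_, (Nat.add_sub_of_le (by omega)).symm, by omega⟩

end SimpleGraph

open SimpleGraph

theorem small_cycle_estimate_general {V : Type} [Fintype V] (G : SimpleGraph V)
    (b : ℕ)
    (hbetti : G.edgeFinset.card + Nat.card G.ConnectedComponent = Fintype.card V + b)
    (g : ℕ) (x₀ : V) (w₀ : G.Walk x₀ x₀) (hw₀ : w₀.IsCycle) (hg : w₀.length = g)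
    (h : ℕ) (hh1 : 1 ≤ h) (hhg : h ≤ g) (hhb : h ≤ b - 1)
    (S : ℝ) (hSpos : 0 < S)
    (hsys : ∀ (V' : Type) [Fintype V'] (G' : SimpleGraph V') (b' : ℕ),
      G'.edgeFinset.card + Nat.card G'.ConnectedComponent = Fintype.card V' + b' →
      b - h ≤ b' →
      ∀ lam' : Sym2 V' → ℝ, (∀ e ∈ G'.edgeFinset, 0 ≤ lam' e) →
        (∑ e ∈ G'.edgeFinset, lam' e = 1) →
        ∃ (x : V') (w : G'.Walk x x), w.IsCycle ∧ ∑ e ∈ w.edges.toFinset, lam' e ≤ S)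
    (lam : Sym2 V → ℝ) (hnn : ∀ e ∈ G.edgeFinset, 0 ≤ lam e)
    (hsum : ∑ e ∈ G.edgeFinset, lam e = 1) :
    ∃ (x : V) (w : G.Walk x x), w.IsCycle ∧
      ∑ e ∈ w.edges.toFinset, lam e ≤ ((g : ℝ) * S) / ((h : ℝ) * S + (g : ℝ)) := by
  have hC : #w₀.edges.toFinset = g := by
    rw [List.toFinset_card_of_nodup hw₀.edges_nodup, w₀.length_edges, hg]
  obtain ⟨D, hDC, hD, hDheavy⟩ :=
    w₀.edges.toFinset.exists_subset_card_eq_mul_sum_le lam (hC ▸ hhg)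
  have hDE := hDC.trans w₀.edges_toFinset_subset_edgeFinset
  obtain ⟨G', hG'G, hG'E⟩ : ∃ G' ≤ G, G'.edgeFinset = G.edgeFinset \ D :=
    ⟨G.deleteEdges D, G.deleteEdges_le _, by simp⟩
  obtain ⟨b', hβ', hb'⟩ := G.exists_add_card_connectedComponent_eq_of_le hG'G (k := h)
    (by rw [hG'E, ← hD, card_sdiff_add_card_eq_card hDE]) (by omega) hbetti
  obtain ⟨x, w, hw, hwS⟩ := G'.exists_isCycle_sum_le_mul_sum
    (G'.edgeFinset_nonempty_of_add_card_connectedComponent_eq (by omega) hβ')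
    (hsys V G' b' hβ' (by omega)) lam fun e he ↦ hnn e (mem_sdiff.mp (hG'E ▸ he)).1
  rw [hG'E, sum_sdiff_eq_sub hDE, hsum] at hwS
  rw [hC] at hDheavy
  obtain hle | hle := min_le_iff.mp <| min_le_mul_div_add_of_mul_le_mul hSpos.le
    (by exact_mod_cast hh1.trans hhg) h.cast_nonneg hDheavy
  · exact ⟨x₀, w₀, hw₀, hle⟩
  · exact ⟨x, w.mapLe hG'G, hw.mapLe hG'G, by
      rw [Walk.edges_mapLe_eq_edges]; exact hwS.trans hle⟩

/-- The small cycle estimate (Section 3.1 of the paper): if `G` is 3-edge-connected with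
first Betti number `b ≥ 2` (encoded by `|E| + c = |V| + b`) and contains a cycle of length
`g`, if `1 ≤ h ≤ min(g, b−1)`, and if every graph of first Betti number at least `b − h`
with a probability edge weighting has a cycle of weight at most `S > 0`, then every
probability edge weighting of `G` admits a cycle of weight at most `gS/(hS + g)`,
i.e. `λ(C)⁻¹ ≥ h/g + 1/S`. -/
theorem small_cycle_estimate {V : Type} [Fintype V] (G : SimpleGraph V)
    (hconn : ∀ s : Set (Sym2 V), s.ncard ≤ 2 → (G.deleteEdges s).Connected)
    (b : ℕ) (hb : 2 ≤ b)
    (hbetti : G.edgeFinset.card + Nat.card G.ConnectedComponent = Fintype.card V + b)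
    (g : ℕ) (x₀ : V) (w₀ : G.Walk x₀ x₀) (hw₀ : w₀.IsCycle) (hg : w₀.length = g)
    (h : ℕ) (hh1 : 1 ≤ h) (hhg : h ≤ g) (hhb : h ≤ b - 1)
    (S : ℝ) (hSpos : 0 < S)
    (hsys : ∀ (V' : Type) [Fintype V'] (G' : SimpleGraph V') (b' : ℕ),
      G'.edgeFinset.card + Nat.card G'.ConnectedComponent = Fintype.card V' + b' →
      b - h ≤ b' →
      ∀ lam' : Sym2 V' → ℝ, (∀ e ∈ G'.edgeFinset, 0 ≤ lam' e) →
        (∑ e ∈ G'.edgeFinset, lam' e = 1) →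
        ∃ (x : V') (w : G'.Walk x x), w.IsCycle ∧ ∑ e ∈ w.edges.toFinset, lam' e ≤ S)
    (lam : Sym2 V → ℝ) (hnn : ∀ e ∈ G.edgeFinset, 0 ≤ lam e)
    (hsum : ∑ e ∈ G.edgeFinset, lam e = 1) :
    ∃ (x : V) (w : G.Walk x x), w.IsCycle ∧
      ∑ e ∈ w.edges.toFinset, lam e ≤ ((g : ℝ) * S) / ((h : ℝ) * S + (g : ℝ)) :=
  small_cycle_estimate_general G b hbetti g x₀ w₀ hw₀ hg h hh1 hhg hhb S hSpos hsys lam hnn hsum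
end

section
/- (Large girth estimate, second case) Let G be a finite simple cubic graph (every vertex has degree exactly 3) with first Betti number b ≥ 4, and suppose S > 0 is a real number such that every finite simple graph with first Betti number at least b−3, equipped with any probability edge weighting, contains a cycle of weight at most S. Then for every probability edge weighting λ of G there exists a cycle C in G with λ(C) ≤ ((3b−8)/(3b−3))·S. -/
/-!
Each edge of a cubic graph meets five edges (itself included) and is met by five, so averaging
over the edges gives an edge `uv` whose five surrounding edges carry weight at least
`5 / |E| ≥ 5 / (3b - 3)`, because `|E| = 3 (b - c) ≤ 3b - 3` for `c ≥ 1` components. Deleting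
`u` and `v` removes those five edges and two vertices without merging components, so the
remaining graph has first Betti number at least `b - 3`. Renormalising `λ` on it gives a cycle
of weight at most `(1 - 5 / (3b - 3)) S`.
-/

attribute [local instance] Classical.propDecidable

open Finset SimpleGraph

lemma Fintype.card_compl_pair_add_two {V : Type*} [Fintype V] {u v : V} (huv : u ≠ v) :
    Fintype.card ↥({u, v}ᶜ : Set V) + 2 = Fintype.card V := by
  have := card_le_univ ({u, v} : Finset V)
  rw [card_pair huv] at this
  rw [Fintype.card_compl_set, ← Set.toFinset_card, Set.toFinset_insert, Set.toFinset_singleton,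
    card_pair huv]
  omega

lemma one_sub_le_of_five_div_le {E b t : ℝ} (hE : 0 < E) (hEb : E + 3 ≤ 3 * b)
    (ht : 5 / E ≤ t) : 1 - t ≤ (3 * b - 8) / (3 * b - 3) := by
  rw [div_le_iff₀ hE] at ht
  rw [le_div_iff₀ (by linarith)]
  nlinarith

namespace SimpleGraph

section

variable {V W : Type*} {G : SimpleGraph V} {H : SimpleGraph W}

variable (G) in
def HasCycleOfWeightLE (lam : Sym2 V → ℝ) (S : ℝ) : Prop :=
  ∃ (x : V) (w : G.Walk x x), w.IsCycle ∧ ∑ e ∈ w.edges.toFinset, lam e ≤ S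

lemma HasCycleOfWeightLE.mono {lam : Sym2 V → ℝ} {S T : ℝ} (h : G.HasCycleOfWeightLE lam S)
    (hST : S ≤ T) : G.HasCycleOfWeightLE lam T :=
  let ⟨x, w, hw, hle⟩ := h
  ⟨x, w, hw, hle.trans hST⟩

lemma HasCycleOfWeightLE.map {f : G →g H} (hf : Function.Injective f)
    {lam : Sym2 W → ℝ} {S : ℝ} (h : G.HasCycleOfWeightLE (lam ∘ Sym2.map f) S) :
    H.HasCycleOfWeightLE lam S := by
  obtain ⟨x, w, hw, hle⟩ := h
  refine ⟨f x, w.map f, hw.map hf, ?_⟩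
  have himage : (w.edges.map (Sym2.map f)).toFinset = w.edges.toFinset.image (Sym2.map f) :=
    Multiset.toFinset_map _ (w.edges : Multiset (Sym2 V))
  rwa [Walk.edges_map, himage, sum_image fun _ _ _ _ h => Sym2.map.injective hf h]

lemma ConnectedComponent.surjective_map_induce {s : Set V}
    (h : ∀ x, ∃ y ∈ s, G.Reachable x y) :
    Function.Surjective (ConnectedComponent.map (Embedding.induce s (G := G)).toHom) := by
  intro c
  induction c using ConnectedComponent.ind with
  | h x =>
    obtain ⟨y, hy, hxy⟩ := h x
    exact ⟨(G.induce s).connectedComponentMk ⟨y, hy⟩, ConnectedComponent.sound hxy.symm⟩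

end

variable {V : Type*} [Fintype V] {G : SimpleGraph V}

variable (G) in
/-- The edges of `G` sharing an endpoint with `e`, including `e` itself. -/
noncomputable def edgeNbhdFinset (e : Sym2 V) : Finset (Sym2 V) :=
  {f ∈ G.edgeFinset | ∃ z ∈ e, z ∈ f}

lemma edgeNbhdFinset_mk (u v : V) :
    G.edgeNbhdFinset s(u, v) = G.incidenceFinset u ∪ G.incidenceFinset v := by
  ext f
  simp only [edgeNbhdFinset, incidenceFinset_eq_filter, mem_filter, mem_union, Sym2.mem_iff,
    exists_eq_or_imp, exists_eq_left]
  tauto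

lemma incidenceFinset_inter_incidenceFinset {u v : V} (huv : G.Adj u v) :
    G.incidenceFinset u ∩ G.incidenceFinset v = {s(u, v)} := by
  ext f
  simp only [mem_inter, incidenceFinset_eq_filter, mem_filter, mem_singleton]
  constructor
  · rintro ⟨⟨-, hu⟩, -, hv⟩
    exact (Sym2.mem_and_mem_iff huv.ne).1 ⟨hu, hv⟩
  · rintro rfl
    simpa using huv

lemma card_edgeNbhdFinset_mk_add_one {u v : V} (huv : G.Adj u v) :
    #(G.edgeNbhdFinset s(u, v)) + 1 = G.degree u + G.degree v := by
  rw [edgeNbhdFinset_mk, ← card_incidenceFinset_eq_degree, ← card_incidenceFinset_eq_degree,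
    ← card_union_add_card_inter, incidenceFinset_inter_incidenceFinset huv, card_singleton]

lemma sum_sum_edgeNbhdFinset {d : ℕ} (hG : G.IsRegularOfDegree d) (lam : Sym2 V → ℝ) :
    ∑ e ∈ G.edgeFinset, ∑ f ∈ G.edgeNbhdFinset e, lam f
      = (2 * d - 1 : ℕ) * ∑ e ∈ G.edgeFinset, lam e := by
  have hsymm : ∀ e f, e ∈ G.edgeFinset ∧ f ∈ G.edgeNbhdFinset e ↔
      e ∈ G.edgeNbhdFinset f ∧ f ∈ G.edgeFinset := by
    intro e f
    simp only [edgeNbhdFinset, mem_filter]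
    constructor
    · rintro ⟨he, hf, z, hze, hzf⟩
      exact ⟨⟨he, z, hzf, hze⟩, hf⟩
    · rintro ⟨⟨he, z, hzf, hze⟩, hf⟩
      exact ⟨he, hf, z, hze, hzf⟩
  rw [sum_comm' hsymm, mul_sum]
  refine sum_congr rfl fun e he => ?_
  induction e with
  | h u v =>
    have huv : G.Adj u v := by simpa using he
    have hcard := card_edgeNbhdFinset_mk_add_one huv
    rw [hG.degree_eq, hG.degree_eq] at hcard
    rw [sum_const, nsmul_eq_mul, show #(G.edgeNbhdFinset s(u, v)) = 2 * d - 1 by omega]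

lemma exists_adj_le_sum_incidenceFinset_union {d : ℕ} (hG : G.IsRegularOfDegree d)
    (lam : Sym2 V → ℝ) (hE : G.edgeFinset.Nonempty) :
    ∃ u v, G.Adj u v ∧ (2 * d - 1 : ℕ) * (∑ e ∈ G.edgeFinset, lam e) / #G.edgeFinset
      ≤ ∑ f ∈ G.incidenceFinset u ∪ G.incidenceFinset v, lam f := by
  have hE0 : (#G.edgeFinset : ℝ) ≠ 0 := by exact_mod_cast hE.card_pos.ne'
  have hmean :
      ∑ _e ∈ G.edgeFinset, (2 * d - 1 : ℕ) * (∑ e ∈ G.edgeFinset, lam e) / #G.edgeFinset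
      = ∑ e ∈ G.edgeFinset, ∑ f ∈ G.edgeNbhdFinset e, lam f := by
    rw [sum_sum_edgeNbhdFinset hG, sum_const, nsmul_eq_mul, mul_div_cancel₀ _ hE0]
  obtain ⟨e, he, hle⟩ := exists_le_of_sum_le hE hmean.le
  induction e with
  | h u v => exact ⟨u, v, by simpa using he, by rwa [← edgeNbhdFinset_mk]⟩

lemma map_edgeFinset_induce_compl_pair (u v : V) :
    (G.induce {u, v}ᶜ).edgeFinset.map
        (Function.Embedding.subtype (· ∈ ({u, v}ᶜ : Set V))).sym2Map
      = G.edgeFinset \ (G.incidenceFinset u ∪ G.incidenceFinset v) := by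
  rw [map_edgeFinset_induce]
  ext e
  simp only [mem_inter, mem_sdiff, mem_union, incidenceFinset_eq_filter, mem_filter,
    mem_sym2_iff, Set.mem_toFinset, Set.mem_compl_iff, Set.mem_insert_iff, Set.mem_singleton_iff]
  grind

lemma sum_edgeFinset_induce_compl_pair (u v : V) (lam : Sym2 V → ℝ) :
    ∑ e ∈ (G.induce {u, v}ᶜ).edgeFinset, lam (Sym2.map Subtype.val e)
      = ∑ e ∈ G.edgeFinset, lam e
        - ∑ e ∈ G.incidenceFinset u ∪ G.incidenceFinset v, lam e := by
  rw [← sum_sdiff_eq_sub (union_subset (G.incidenceFinset_subset u) (G.incidenceFinset_subset v)),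
    ← map_edgeFinset_induce_compl_pair, sum_map]
  rfl

lemma card_edgeFinset_induce_compl_pair {u v : V} (huv : G.Adj u v) :
    #(G.induce {u, v}ᶜ).edgeFinset + G.degree u + G.degree v = #G.edgeFinset + 1 := by
  have hsub : G.incidenceFinset u ∪ G.incidenceFinset v ⊆ G.edgeFinset :=
    union_subset (G.incidenceFinset_subset u) (G.incidenceFinset_subset v)
  have hnbhd := card_edgeNbhdFinset_mk_add_one huv
  rw [edgeNbhdFinset_mk] at hnbhd
  have := card_le_card hsub
  rw [← card_map, map_edgeFinset_induce_compl_pair, card_sdiff_of_subset hsub]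
  omega

lemma exists_adj_ne_of_two_le_degree {x : V} (hx : 2 ≤ G.degree x) (y : V) :
    ∃ w, G.Adj x w ∧ w ≠ y := by
  obtain ⟨w, hw, hwy⟩ :=
    exists_mem_ne (s := G.neighborFinset x) ((card_neighborFinset_eq_degree G x).symm ▸ hx) y
  exact ⟨w, (mem_neighborFinset G x w).1 hw, hwy⟩

lemma card_connectedComponent_le_induce_compl_pair {u v : V} (huv : G.Adj u v)
    (hu : 2 ≤ G.degree u) (hv : 2 ≤ G.degree v) :
    Nat.card G.ConnectedComponent ≤ Nat.card (G.induce {u, v}ᶜ).ConnectedComponent := by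
  refine Nat.card_le_card_of_surjective _ (ConnectedComponent.surjective_map_induce fun x => ?_)
  by_cases hx : x = u ∨ x = v
  · have hx2 : 2 ≤ G.degree x := by rcases hx with rfl | rfl <;> assumption
    obtain ⟨w, hxw, hw⟩ := exists_adj_ne_of_two_le_degree hx2 (if x = u then v else u)
    refine ⟨w, ?_, hxw.reachable⟩
    have := hxw.ne
    simp only [Set.mem_compl_iff, Set.mem_insert_iff, Set.mem_singleton_iff]
    grind
  · exact ⟨x, by simpa using hx, .refl x⟩

lemma IsRegularOfDegree.exists_betti_induce_compl_pair (hG : G.IsRegularOfDegree 3) {u v : V}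
    (huv : G.Adj u v) {b : ℕ} (hb3 : 3 ≤ b)
    (hb : #G.edgeFinset + Nat.card G.ConnectedComponent = Fintype.card V + b) :
    ∃ b', b - 3 ≤ b' ∧
      #(G.induce {u, v}ᶜ).edgeFinset + Nat.card (G.induce {u, v}ᶜ).ConnectedComponent
        = Fintype.card ↥({u, v}ᶜ : Set V) + b' := by
  have hE := card_edgeFinset_induce_compl_pair huv
  have hV := Fintype.card_compl_pair_add_two huv.ne
  have hc := card_connectedComponent_le_induce_compl_pair huv (by rw [hG.degree_eq]; omega)
    (by rw [hG.degree_eq]; omega)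
  rw [hG.degree_eq, hG.degree_eq] at hE
  exact ⟨b - 3 + (Nat.card (G.induce {u, v}ᶜ).ConnectedComponent
    - Nat.card G.ConnectedComponent), by omega, by omega⟩

lemma IsRegularOfDegree.card_edgeFinset_bounds (hG : G.IsRegularOfDegree 3) {b : ℕ}
    (hb0 : b ≠ 0) (hb : #G.edgeFinset + Nat.card G.ConnectedComponent = Fintype.card V + b) :
    6 ≤ #G.edgeFinset ∧ #G.edgeFinset + 3 ≤ 3 * b := by
  obtain hV | hV := isEmpty_or_nonempty V
  · exact absurd (by simpa [Finset.eq_empty_of_isEmpty] using hb.symm) hb0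
  have hsum := G.sum_degrees_eq_twice_card_edges
  simp only [hG.degree_eq, sum_const, card_univ, smul_eq_mul] at hsum
  have hV := G.degree_lt_card_verts (Classical.arbitrary V)
  rw [hG.degree_eq] at hV
  have hc : 0 < Nat.card G.ConnectedComponent := Nat.card_pos
  omega

lemma sum_toFinset_edges_le_sum_edgeFinset {x y : V} (w : G.Walk x y) {lam : Sym2 V → ℝ}
    (hlam : ∀ e ∈ G.edgeFinset, 0 ≤ lam e) :
    ∑ e ∈ w.edges.toFinset, lam e ≤ ∑ e ∈ G.edgeFinset, lam e :=
  sum_le_sum_of_subset_of_nonneg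
    (fun _ he => mem_edgeFinset.2 (w.edges_subset_edgeSet (List.mem_toFinset.1 he)))
    fun e he _ => hlam e he

lemma hasCycleOfWeightLE_sum_mul {S : ℝ} (hE : G.edgeFinset.Nonempty)
    (hG : ∀ lam : Sym2 V → ℝ, (∀ e ∈ G.edgeFinset, 0 ≤ lam e) →
      ∑ e ∈ G.edgeFinset, lam e = 1 → G.HasCycleOfWeightLE lam S)
    {μ : Sym2 V → ℝ} (hμ : ∀ e ∈ G.edgeFinset, 0 ≤ μ e) :
    G.HasCycleOfWeightLE μ ((∑ e ∈ G.edgeFinset, μ e) * S) := by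
  rcases (sum_nonneg hμ).eq_or_lt with hr | hr
  · -- a point mass still yields a cycle, and its `μ`-weight is at most the total mass `0`
    obtain ⟨e, he⟩ := hE
    obtain ⟨x, w, hw, -⟩ := hG (fun f => if f = e then 1 else 0)
      (fun f _ => by positivity) (by rw [sum_ite_eq', if_pos he])
    refine ⟨x, w, hw, ?_⟩
    calc _ ≤ ∑ e ∈ G.edgeFinset, μ e := sum_toFinset_edges_le_sum_edgeFinset w hμ
      _ = _ := by rw [← hr, zero_mul]
  · set r := ∑ e ∈ G.edgeFinset, μ e
    obtain ⟨x, w, hw, hle⟩ := hG (fun f => μ f / r) (fun f hf => div_nonneg (hμ f hf) hr.le)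
      (by rw [← sum_div, div_self hr.ne'])
    refine ⟨x, w, hw, ?_⟩
    rw [← sum_div, div_le_iff₀ hr] at hle
    linarith

end SimpleGraph

/-- Large girth estimate, part (2) (Lemma 3.4 of the paper): if `G` is a cubic graph with
first Betti number `b ≥ 4` (encoded by `|E| + c = |V| + b`), and if every graph of first
Betti number at least `b − 3` with a probability edge weighting has a cycle of weight at
most `S > 0`, then every probability edge weighting of `G` admits a cycle of weight at
most `((3b−8)/(3b−3))·S`. -/
theorem large_girth_estimate_two {V : Type} [Fintype V] (G : SimpleGraph V)
    (hcubic : ∀ v : V, G.degree v = 3)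
    (b : ℕ) (hb : 4 ≤ b)
    (hbetti : G.edgeFinset.card + Nat.card G.ConnectedComponent = Fintype.card V + b)
    (S : ℝ) (hSpos : 0 < S)
    (hsys : ∀ (V' : Type) [Fintype V'] (G' : SimpleGraph V') (b' : ℕ),
      G'.edgeFinset.card + Nat.card G'.ConnectedComponent = Fintype.card V' + b' →
      b - 3 ≤ b' →
      ∀ lam' : Sym2 V' → ℝ, (∀ e ∈ G'.edgeFinset, 0 ≤ lam' e) →
        (∑ e ∈ G'.edgeFinset, lam' e = 1) →
        ∃ (x : V') (w : G'.Walk x x), w.IsCycle ∧ ∑ e ∈ w.edges.toFinset, lam' e ≤ S)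
    (lam : Sym2 V → ℝ) (hnn : ∀ e ∈ G.edgeFinset, 0 ≤ lam e)
    (hsum : ∑ e ∈ G.edgeFinset, lam e = 1) :
    ∃ (x : V) (w : G.Walk x x), w.IsCycle ∧
      ∑ e ∈ w.edges.toFinset, lam e ≤ ((3 * (b : ℝ) - 8) / (3 * (b : ℝ) - 3)) * S := by
  have hG : G.IsRegularOfDegree 3 := hcubic
  obtain ⟨hE6, hEb⟩ := hG.card_edgeFinset_bounds (by omega) hbetti
  obtain ⟨u, v, huv, hheavy⟩ :=
    exists_adj_le_sum_incidenceFinset_union hG lam (card_pos.1 (by omega))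
  rw [hsum, mul_one, show ((2 * 3 - 1 : ℕ) : ℝ) = 5 by norm_num] at hheavy
  have hweight := one_sub_le_of_five_div_le (b := b) (by positivity) (by exact_mod_cast hEb) hheavy
  obtain ⟨b', hb', hbetti'⟩ := hG.exists_betti_induce_compl_pair huv (by omega) hbetti
  have hE' : (G.induce {u, v}ᶜ).edgeFinset.Nonempty := by
    have := card_edgeFinset_induce_compl_pair huv
    rw [hcubic, hcubic] at this
    exact card_pos.1 (by omega)
  set f := Embedding.induce ({u, v}ᶜ : Set V) (G := G)
  have hcycle := hasCycleOfWeightLE_sum_mul hE' (hsys _ _ b' hbetti' hb')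
    (μ := lam ∘ Sym2.map f.toHom)
    fun e he => hnn _ (by simpa using f.toHom.map_mem_edgeSet (mem_edgeFinset.1 he))
  have hbound : (∑ e ∈ (G.induce {u, v}ᶜ).edgeFinset, lam (Sym2.map Subtype.val e)) * S
      ≤ (3 * (b : ℝ) - 8) / (3 * b - 3) * S := by
    rw [sum_edgeFinset_induce_compl_pair, hsum]
    exact mul_le_mul_of_nonneg_right hweight hSpos.le
  exact (hcycle.map f.injective).mono hbound
end

section
/- Let G be a finite connected simple graph with exactly d+1 vertices, where d ≥ 1, and let λ be a probability edge weighting of G. Then there exists a vertex v of G such that the set of edges incident to v has total λ-weight at most 2/(d+1). In particular, G has an edge cut of weight at most 2/(d+1). -/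
attribute [local instance] Classical.propDecidable

/-! Every edge has exactly two endpoints, so the vertex stars of `G` have total weight twice the
total edge weight, that is `2`. Averaged over the `d + 1` vertices, some star weighs at most
`2 / (d + 1)`, and deleting a star isolates its centre, which disconnects a graph with at least
two vertices. -/

namespace SimpleGraph

variable {V : Type*} (G : SimpleGraph V)

theorem sum_sum_incidenceFinset {M : Type*} [AddCommMonoid M] [Fintype V] [DecidableEq V]
    [Fintype G.edgeSet] [∀ v, Fintype (G.neighborSet v)] (f : Sym2 V → M) :
    ∑ v, ∑ e ∈ G.incidenceFinset v, f e = 2 • ∑ e ∈ G.edgeFinset, f e := by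
  simp_rw [incidenceFinset_eq_filter, Finset.sum_filter]
  rw [Finset.sum_comm, Finset.smul_sum]
  refine Finset.sum_congr rfl fun e he => ?_
  have hends : ({v | v ∈ e} : Finset V) = e.toFinset := by ext; simp
  rw [← Finset.sum_filter, hends, Finset.sum_const,
    Sym2.card_toFinset_of_not_isDiag e (G.not_isDiag_of_mem_edgeSet (mem_edgeFinset.mp he))]

theorem isIsolated_deleteIncidenceSet (x : V) : (G.deleteIncidenceSet x).IsIsolated x :=
  fun _ h => (deleteIncidenceSet_adj.mp h).2.1 rfl

theorem not_connected_deleteIncidenceSet [Nontrivial V] (x : V) :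
    ¬ (G.deleteIncidenceSet x).Connected :=
  fun h => h.preconnected.not_isIsolated x (G.isIsolated_deleteIncidenceSet x)

end SimpleGraph

theorem graphic_cogirth_bound_general {V : Type} [Fintype V] (G : SimpleGraph V)
    (d : ℕ) (hd : 1 ≤ d) (hcard : Fintype.card V = d + 1)
    (lam : Sym2 V → ℝ)
    (hsum : ∑ e ∈ G.edgeFinset, lam e = 1) :
    (∃ v : V, ∑ e ∈ G.incidenceFinset v, lam e ≤ 2 / ((d : ℝ) + 1)) ∧
      ∃ A : Finset (Sym2 V), A ⊆ G.edgeFinset ∧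
        ¬ (G.deleteEdges (A : Set (Sym2 V))).Connected ∧
        ∑ e ∈ A, lam e ≤ 2 / ((d : ℝ) + 1) := by
  have hstars : ∑ v, ∑ e ∈ G.incidenceFinset v, lam e = ∑ _ : V, 2 / ((d : ℝ) + 1) := by
    rw [G.sum_sum_incidenceFinset, hsum, Finset.sum_const, Finset.card_univ, hcard,
      nsmul_eq_mul, nsmul_eq_mul]
    push_cast
    field_simp
  have : Nontrivial V := Fintype.one_lt_card_iff_nontrivial.mp (by omega)
  obtain ⟨v, -, hv⟩ := Finset.exists_le_of_sum_le Finset.univ_nonempty hstars.le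
  refine ⟨⟨v, hv⟩, G.incidenceFinset v, G.incidenceFinset_subset v, ?_, hv⟩
  rw [SimpleGraph.coe_incidenceFinset]
  exact G.not_connected_deleteIncidenceSet v

/-- Proposition 4.3 of the paper: if `G` is a finite connected simple graph on `d + 1`
vertices (`d ≥ 1`) with a probability edge weighting `λ`, then some vertex `v` is such
that the edges incident to `v` have total weight at most `2/(d+1)`; in particular `G`
has an edge cut of weight at most `2/(d+1)`. -/
theorem graphic_cogirth_bound {V : Type} [Fintype V] (G : SimpleGraph V)
    (hconn : G.Connected) (d : ℕ) (hd : 1 ≤ d) (hcard : Fintype.card V = d + 1)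
    (lam : Sym2 V → ℝ) (hnn : ∀ e ∈ G.edgeFinset, 0 ≤ lam e)
    (hsum : ∑ e ∈ G.edgeFinset, lam e = 1) :
    (∃ v : V, ∑ e ∈ G.incidenceFinset v, lam e ≤ 2 / ((d : ℝ) + 1)) ∧
      ∃ A : Finset (Sym2 V), A ⊆ G.edgeFinset ∧
        ¬ (G.deleteEdges (A : Set (Sym2 V))).Connected ∧
        ∑ e ∈ A, lam e ≤ 2 / ((d : ℝ) + 1) :=
  graphic_cogirth_bound_general G d hd hcard lam hsum
end

section
/- Let h_1, …, h_{10} ∈ (ZMod 2)^5 be the ten R_{10}-vectors. Then: (a) for every probability weighting λ on {1,…,10} there exists a nonzero (ZMod 2)-linear functional v on (ZMod 2)^5 with Σ_{i : v(h_i) ≠ 0} λ_i ≤ 2/5; and (b) taking λ_i = 1/10 for all i, every nonzero (ZMod 2)-linear functional v on (ZMod 2)^5 satisfies Σ_{i : v(h_i) ≠ 0} λ_i ≥ 2/5, i.e. v(h_i) ≠ 0 for at least four indices i. In other words, c(R_{10}) = 2/5. -/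
attribute [local instance] Classical.propDecidable

def W (a b : Fin 5) : (Fin 5 → ZMod 2) →ₗ[ZMod 2] ZMod 2 :=
  LinearMap.proj (R := ZMod 2) (φ := fun _ : Fin 5 => ZMod 2) a + LinearMap.proj b

/-- The ten `R₁₀`-vectors in `(ZMod 2)^5`: the five standard basis vectors `e_i`, and the
five vectors `e_{i-1} + e_i + e_{i+1}` with indices taken modulo `5`. -/
def R10 : Fin 5 ⊕ Fin 5 → Fin 5 → ZMod 2
  | Sum.inl i => Pi.single i 1
  | Sum.inr i => Pi.single (i - 1) 1 + Pi.single i 1 + Pi.single (i + 1) 1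

lemma key : ∀ g : Fin 5 → ZMod 2, g ≠ 0 →
    4 ≤ (Finset.univ.filter fun i => (∑ j, R10 i j * g j) ≠ 0).card := by decide

/-- Proposition 4.4 of the paper: the cogirth of the sporadic matroid `R₁₀` equals `2/5`.
(a) For every probability weighting `λ` on the ten `R₁₀`-vectors there is a nonzero
functional `v` with `∑_{i : v(h_i) ≠ 0} λ_i ≤ 2/5`; (b) for the uniform weighting `1/10`,
every nonzero functional `v` satisfies `∑_{i : v(h_i) ≠ 0} 1/10 ≥ 2/5`. -/
theorem sporadic_cogirth_eq :
    (∀ lam : Fin 5 ⊕ Fin 5 → ℝ, (∀ i, 0 ≤ lam i) → (∑ i, lam i = 1) →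
      ∃ v : (Fin 5 → ZMod 2) →ₗ[ZMod 2] ZMod 2, v ≠ 0 ∧
        ∑ i ∈ Finset.univ.filter (fun i => v (R10 i) ≠ 0), lam i ≤ (2 / 5 : ℝ)) ∧
    (∀ v : (Fin 5 → ZMod 2) →ₗ[ZMod 2] ZMod 2, v ≠ 0 →
      (2 / 5 : ℝ) ≤ ∑ _i ∈ Finset.univ.filter (fun i => v (R10 i) ≠ 0), (1 / 10 : ℝ)) := by
  constructor
  · intro lam hpos hsum
    rw [Fintype.sum_sum_type, Fin.sum_univ_five, Fin.sum_univ_five] at hsum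
    have hex :
        (lam (Sum.inl 0) + lam (Sum.inl 1) + lam (Sum.inr 4) + lam (Sum.inr 2) ≤ 2/5) ∨
        (lam (Sum.inl 1) + lam (Sum.inl 2) + lam (Sum.inr 0) + lam (Sum.inr 3) ≤ 2/5) ∨
        (lam (Sum.inl 2) + lam (Sum.inl 3) + lam (Sum.inr 1) + lam (Sum.inr 4) ≤ 2/5) ∨
        (lam (Sum.inl 3) + lam (Sum.inl 4) + lam (Sum.inr 2) + lam (Sum.inr 0) ≤ 2/5) ∨
        (lam (Sum.inl 4) + lam (Sum.inl 0) + lam (Sum.inr 3) + lam (Sum.inr 1) ≤ 2/5) := by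
      by_contra h
      push_neg at h
      obtain ⟨h0, h1, h2, h3, h4⟩ := h
      linarith
    rcases hex with hi | hi | hi | hi | hi
    · refine ⟨W 0 1, ?_, ?_⟩
      · intro h
        have h1 := LinearMap.congr_fun h (Pi.single (0 : Fin 5) (1 : ZMod 2))
        revert h1; simp [W, Pi.single_apply]
      · have hfil : Finset.univ.filter
            (fun x => W 0 1 (R10 x) ≠ 0) =
            ({Sum.inl 0, Sum.inl 1, Sum.inr 4, Sum.inr 2} : Finset (Fin 5 ⊕ Fin 5)) := by
          ext x
          simp only [Finset.mem_filter, Finset.mem_univ, true_and, W, LinearMap.add_apply,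
            LinearMap.proj_apply, Finset.mem_insert, Finset.mem_singleton]
          revert x; decide
        rw [hfil, Finset.sum_insert (by decide), Finset.sum_insert (by decide),
          Finset.sum_insert (by decide), Finset.sum_singleton]
        linarith
    · refine ⟨W 1 2, ?_, ?_⟩
      · intro h
        have h1 := LinearMap.congr_fun h (Pi.single (1 : Fin 5) (1 : ZMod 2))
        revert h1; simp [W, Pi.single_apply]
      · have hfil : Finset.univ.filter
            (fun x => W 1 2 (R10 x) ≠ 0) =
            ({Sum.inl 1, Sum.inl 2, Sum.inr 0, Sum.inr 3} : Finset (Fin 5 ⊕ Fin 5)) := by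
          ext x
          simp only [Finset.mem_filter, Finset.mem_univ, true_and, W, LinearMap.add_apply,
            LinearMap.proj_apply, Finset.mem_insert, Finset.mem_singleton]
          revert x; decide
        rw [hfil, Finset.sum_insert (by decide), Finset.sum_insert (by decide),
          Finset.sum_insert (by decide), Finset.sum_singleton]
        linarith
    · refine ⟨W 2 3, ?_, ?_⟩
      · intro h
        have h1 := LinearMap.congr_fun h (Pi.single (2 : Fin 5) (1 : ZMod 2))
        revert h1; simp [W, Pi.single_apply]
      · have hfil : Finset.univ.filter
            (fun x => W 2 3 (R10 x) ≠ 0) =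
            ({Sum.inl 2, Sum.inl 3, Sum.inr 1, Sum.inr 4} : Finset (Fin 5 ⊕ Fin 5)) := by
          ext x
          simp only [Finset.mem_filter, Finset.mem_univ, true_and, W, LinearMap.add_apply,
            LinearMap.proj_apply, Finset.mem_insert, Finset.mem_singleton]
          revert x; decide
        rw [hfil, Finset.sum_insert (by decide), Finset.sum_insert (by decide),
          Finset.sum_insert (by decide), Finset.sum_singleton]
        linarith
    · refine ⟨W 3 4, ?_, ?_⟩
      · intro h
        have h1 := LinearMap.congr_fun h (Pi.single (3 : Fin 5) (1 : ZMod 2))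
        revert h1; simp [W, Pi.single_apply]
      · have hfil : Finset.univ.filter
            (fun x => W 3 4 (R10 x) ≠ 0) =
            ({Sum.inl 3, Sum.inl 4, Sum.inr 2, Sum.inr 0} : Finset (Fin 5 ⊕ Fin 5)) := by
          ext x
          simp only [Finset.mem_filter, Finset.mem_univ, true_and, W, LinearMap.add_apply,
            LinearMap.proj_apply, Finset.mem_insert, Finset.mem_singleton]
          revert x; decide
        rw [hfil, Finset.sum_insert (by decide), Finset.sum_insert (by decide),
          Finset.sum_insert (by decide), Finset.sum_singleton]
        linarith
    · refine ⟨W 4 0, ?_, ?_⟩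
      · intro h
        have h1 := LinearMap.congr_fun h (Pi.single (4 : Fin 5) (1 : ZMod 2))
        revert h1; simp [W, Pi.single_apply]
      · have hfil : Finset.univ.filter
            (fun x => W 4 0 (R10 x) ≠ 0) =
            ({Sum.inl 4, Sum.inl 0, Sum.inr 3, Sum.inr 1} : Finset (Fin 5 ⊕ Fin 5)) := by
          ext x
          simp only [Finset.mem_filter, Finset.mem_univ, true_and, W, LinearMap.add_apply,
            LinearMap.proj_apply, Finset.mem_insert, Finset.mem_singleton]
          revert x; decide
        rw [hfil, Finset.sum_insert (by decide), Finset.sum_insert (by decide),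
          Finset.sum_insert (by decide), Finset.sum_singleton]
        linarith
  · intro v hv
    set g : Fin 5 → ZMod 2 := fun j => v fun k => if j = k then 1 else 0 with hg
    have hval : ∀ x, v x = ∑ j, x j * g j := by
      intro x
      rw [LinearMap.pi_apply_eq_sum_univ]
      simp [hg, smul_eq_mul]
    have hgne : g ≠ 0 := by
      intro h0
      apply hv
      ext x
      simp [hval, h0]
    have hcard := key g hgne
    have hfil : Finset.univ.filter (fun i => v (R10 i) ≠ 0) =
        Finset.univ.filter (fun i => (∑ j, R10 i j * g j) ≠ 0) := by
      apply Finset.filter_congr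
      intro x _
      simp [hval]
    rw [hfil, Finset.sum_const]
    have h4 : (4 : ℝ) ≤ (Finset.univ.filter fun i => (∑ j, R10 i j * g j) ≠ 0).card := by
      exact_mod_cast hcard
    simp only [nsmul_eq_mul]
    linarith
end

section
/- (1-sum bound) Let V₁ and V₂ be nonzero finite-dimensional vector spaces over 𝔽₂ = ZMod 2, and let e¹ : ι₁ → V₁ and e² : ι₂ → V₂ be finite families of vectors spanning V₁ and V₂ respectively. Let e : ι₁ ⊕ ι₂ → V₁ × V₂ be the combined family sending i ∈ ι₁ to (e¹_i, 0) and j ∈ ι₂ to (0, e²_j). Then c(e) · (c(e¹) + c(e²)) ≤ c(e¹) · c(e²); equivalently, c(e)⁻¹ ≥ c(e¹)⁻¹ + c(e²)⁻¹. -/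
/-!
Let `λ` be a probability weighting of the 1-sum family, with total mass `t₁` on the first summand
and `t₂ = 1 - t₁` on the second. A nonzero functional on `V₁`, composed with the first projection,
is a nonzero functional on `V₁ × V₂` that only sees the first summand, so `m(e, λ) ≤ t₁ c(e¹)` after
renormalising `λ` on `ι₁`; likewise `m(e, λ) ≤ t₂ c(e²)`. Hence
`m(e, λ) (c(e¹) + c(e²)) ≤ (t₂ + t₁) c(e¹) c(e²) = c(e¹) c(e²)`, and one takes the supremum over `λ`.
-/

attribute [local instance] Classical.propDecidable

/-- `mWeight e lam` is the minimum, over nonzero `ZMod 2`-linear functionals `v`,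
of the total `lam`-weight of the indices `i` with `v (e i) ≠ 0`. -/
noncomputable def mWeight {V : Type} [AddCommGroup V] [Module (ZMod 2) V]
    {ι : Type} [Fintype ι] (e : ι → V) (lam : ι → ℝ) : ℝ :=
  sInf {x : ℝ | ∃ v : V →ₗ[ZMod 2] ZMod 2, v ≠ 0 ∧
    x = ∑ i ∈ Finset.univ.filter (fun i => v (e i) ≠ 0), lam i}

/-- The cogirth `c(e)` of a family `e` of vectors over `ZMod 2`: the supremum of
`mWeight e lam` over all probability weightings `lam`. -/
noncomputable def cogirth {V : Type} [AddCommGroup V] [Module (ZMod 2) V]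
    {ι : Type} [Fintype ι] (e : ι → V) : ℝ :=
  sSup {x : ℝ | ∃ lam : ι → ℝ, (∀ i, 0 ≤ lam i) ∧ (∑ i, lam i = 1) ∧ x = mWeight e lam}

section Weight

variable {V : Type} [AddCommGroup V] [Module (ZMod 2) V] {ι : Type} [Fintype ι]
  {e : ι → V} {lam : ι → ℝ}

noncomputable def cocycleWeight (e : ι → V) (lam : ι → ℝ) (v : V →ₗ[ZMod 2] ZMod 2) : ℝ :=
  ∑ i ∈ Finset.univ.filter (fun i => v (e i) ≠ 0), lam i

lemma cocycleWeight_nonneg (h0 : 0 ≤ lam) (v : V →ₗ[ZMod 2] ZMod 2) :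
    0 ≤ cocycleWeight e lam v :=
  Finset.sum_nonneg fun i _ => h0 i

lemma cocycleWeight_le_sum (h0 : 0 ≤ lam) (v : V →ₗ[ZMod 2] ZMod 2) :
    cocycleWeight e lam v ≤ ∑ i, lam i :=
  Finset.sum_le_sum_of_subset_of_nonneg (Finset.filter_subset _ _) fun i _ _ => h0 i

lemma cocycleWeight_smul (t : ℝ) (v : V →ₗ[ZMod 2] ZMod 2) :
    cocycleWeight e (t • lam) v = t * cocycleWeight e lam v :=
  (Finset.mul_sum _ _ _).symm

lemma mWeight_eq_sInf_cocycleWeight : mWeight e lam =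
    sInf {x : ℝ | ∃ v : V →ₗ[ZMod 2] ZMod 2, v ≠ 0 ∧ x = cocycleWeight e lam v} :=
  rfl

lemma mWeight_nonneg (h0 : 0 ≤ lam) : 0 ≤ mWeight e lam :=
  Real.sInf_nonneg <| by
    rintro _ ⟨v, -, rfl⟩
    exact cocycleWeight_nonneg h0 v

lemma mWeight_le_cocycleWeight (h0 : 0 ≤ lam) {v : V →ₗ[ZMod 2] ZMod 2} (hv : v ≠ 0) :
    mWeight e lam ≤ cocycleWeight e lam v :=
  csInf_le ⟨0, by rintro _ ⟨w, -, rfl⟩; exact cocycleWeight_nonneg h0 w⟩ ⟨v, hv, rfl⟩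

lemma mWeight_le_sum (h0 : 0 ≤ lam) : mWeight e lam ≤ ∑ i, lam i := by
  by_cases h : ∃ v : V →ₗ[ZMod 2] ZMod 2, v ≠ 0
  · obtain ⟨v, hv⟩ := h
    exact (mWeight_le_cocycleWeight h0 hv).trans (cocycleWeight_le_sum h0 v)
  · have hempty : {x : ℝ | ∃ v : V →ₗ[ZMod 2] ZMod 2, v ≠ 0 ∧ x = cocycleWeight e lam v} = ∅ :=
      Set.eq_empty_of_forall_notMem fun _ ⟨v, hv, _⟩ => h ⟨v, hv⟩
    rw [mWeight_eq_sInf_cocycleWeight, hempty, Real.sInf_empty]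
    exact Finset.sum_nonneg fun i _ => h0 i

lemma mWeight_smul {t : ℝ} (ht : 0 ≤ t) : mWeight e (t • lam) = t * mWeight e lam := by
  rw [mWeight_eq_sInf_cocycleWeight, mWeight_eq_sInf_cocycleWeight, ← smul_eq_mul,
    ← Real.sInf_smul_of_nonneg ht]
  congr 1
  ext x
  simp only [Set.mem_ofPred_eq, Set.mem_smul_set, smul_eq_mul]
  constructor
  · rintro ⟨v, hv, rfl⟩
    exact ⟨_, ⟨v, hv, rfl⟩, (cocycleWeight_smul t v).symm⟩
  · rintro ⟨_, ⟨v, hv, rfl⟩, rfl⟩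
    exact ⟨v, hv, (cocycleWeight_smul t v).symm⟩

lemma mWeight_le_cogirth (h0 : 0 ≤ lam) (h1 : ∑ i, lam i = 1) : mWeight e lam ≤ cogirth e :=
  le_csSup ⟨1, by rintro _ ⟨μ, hμ0, hμ1, rfl⟩; exact hμ1 ▸ mWeight_le_sum hμ0⟩ ⟨lam, h0, h1, rfl⟩

lemma mWeight_zero : mWeight e 0 = 0 := by
  simpa using mWeight_smul (e := e) (lam := 0) le_rfl

lemma mWeight_le_sum_mul_cogirth (h0 : 0 ≤ lam) : mWeight e lam ≤ (∑ i, lam i) * cogirth e := by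
  rcases (Finset.sum_nonneg fun i _ => h0 i : 0 ≤ ∑ i, lam i).eq_or_lt with ht | ht
  · have hlam : lam = 0 := funext fun i =>
      (Finset.sum_eq_zero_iff_of_nonneg fun i _ => h0 i).mp ht.symm i (Finset.mem_univ i)
    rw [← ht, zero_mul, hlam, mWeight_zero]
  · set t := ∑ i, lam i
    have hμ1 : ∑ i, (t⁻¹ • lam) i = 1 := by
      simp only [Pi.smul_apply, smul_eq_mul, ← Finset.mul_sum, inv_mul_cancel₀ ht.ne', t]
    calc mWeight e lam = t * mWeight e (t⁻¹ • lam) := by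
          rw [← mWeight_smul ht.le, smul_inv_smul₀ ht.ne']
      _ ≤ t * cogirth e := by
          gcongr
          exact mWeight_le_cogirth (smul_nonneg (inv_nonneg.mpr ht.le) h0) hμ1

lemma cogirth_nonneg : 0 ≤ cogirth e :=
  Real.sSup_nonneg <| by
    rintro _ ⟨lam, h0, -, rfl⟩
    exact mWeight_nonneg h0

lemma cogirth_mul_le_of_forall {a b : ℝ} (ha : 0 ≤ a) (hb : 0 ≤ b)
    (h : ∀ lam : ι → ℝ, 0 ≤ lam → ∑ i, lam i = 1 → mWeight e lam * a ≤ b) :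
    cogirth e * a ≤ b := by
  rw [mul_comm, ← smul_eq_mul, cogirth, ← Real.sSup_smul_of_nonneg ha]
  refine Real.sSup_le ?_ hb
  rintro _ ⟨_, ⟨lam, h0, h1, rfl⟩, rfl⟩
  show a * mWeight e lam ≤ b
  rw [mul_comm]
  exact h lam h0 h1

end Weight

section OneSum

variable {V₁ V₂ : Type} [AddCommGroup V₁] [Module (ZMod 2) V₁] [AddCommGroup V₂]
  [Module (ZMod 2) V₂] {ι₁ ι₂ : Type} [Fintype ι₁] [Fintype ι₂]
  (e₁ : ι₁ → V₁) (e₂ : ι₂ → V₂) {lam : ι₁ ⊕ ι₂ → ℝ}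

def oneSum : ι₁ ⊕ ι₂ → V₁ × V₂ :=
  Sum.elim (fun i => (e₁ i, 0)) (fun j => (0, e₂ j))

lemma cocycleWeight_oneSum_comp_fst (v : V₁ →ₗ[ZMod 2] ZMod 2) :
    cocycleWeight (oneSum e₁ e₂) lam (v ∘ₗ LinearMap.fst (ZMod 2) V₁ V₂)
      = cocycleWeight e₁ (lam ∘ Sum.inl) v := by
  rw [cocycleWeight, cocycleWeight, Finset.sum_filter, Finset.sum_filter, Fintype.sum_sum_type]
  simp only [oneSum, Sum.elim_inl, Sum.elim_inr, LinearMap.coe_comp, Function.comp_apply,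
    LinearMap.fst_apply, map_zero, ne_eq, not_true_eq_false, if_false, Finset.sum_const_zero,
    add_zero]
  exact Finset.sum_congr rfl fun i _ => by split_ifs <;> simp_all

lemma cocycleWeight_oneSum_comp_snd (v : V₂ →ₗ[ZMod 2] ZMod 2) :
    cocycleWeight (oneSum e₁ e₂) lam (v ∘ₗ LinearMap.snd (ZMod 2) V₁ V₂)
      = cocycleWeight e₂ (lam ∘ Sum.inr) v := by
  rw [cocycleWeight, cocycleWeight, Finset.sum_filter, Finset.sum_filter, Fintype.sum_sum_type]
  simp only [oneSum, Sum.elim_inl, Sum.elim_inr, LinearMap.coe_comp, Function.comp_apply,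
    LinearMap.snd_apply, map_zero, ne_eq, not_true_eq_false, if_false, Finset.sum_const_zero,
    zero_add]
  exact Finset.sum_congr rfl fun i _ => by split_ifs <;> simp_all

lemma mWeight_oneSum_le_left [Nontrivial V₁] (h0 : 0 ≤ lam) :
    mWeight (oneSum e₁ e₂) lam ≤ mWeight e₁ (lam ∘ Sum.inl) := by
  obtain ⟨v₀, hv₀⟩ := exists_ne (0 : V₁ →ₗ[ZMod 2] ZMod 2)
  rw [mWeight_eq_sInf_cocycleWeight (e := e₁)]
  refine le_csInf ⟨_, v₀, hv₀, rfl⟩ ?_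
  rintro _ ⟨v, hv, rfl⟩
  rw [← cocycleWeight_oneSum_comp_fst e₁ e₂]
  refine mWeight_le_cocycleWeight h0 ?_
  rwa [Ne, ← LinearMap.zero_comp (LinearMap.fst (ZMod 2) V₁ V₂),
    LinearMap.cancel_right LinearMap.fst_surjective]

lemma mWeight_oneSum_le_right [Nontrivial V₂] (h0 : 0 ≤ lam) :
    mWeight (oneSum e₁ e₂) lam ≤ mWeight e₂ (lam ∘ Sum.inr) := by
  obtain ⟨v₀, hv₀⟩ := exists_ne (0 : V₂ →ₗ[ZMod 2] ZMod 2)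
  rw [mWeight_eq_sInf_cocycleWeight (e := e₂)]
  refine le_csInf ⟨_, v₀, hv₀, rfl⟩ ?_
  rintro _ ⟨v, hv, rfl⟩
  rw [← cocycleWeight_oneSum_comp_snd e₁ e₂]
  refine mWeight_le_cocycleWeight h0 ?_
  rwa [Ne, ← LinearMap.zero_comp (LinearMap.snd (ZMod 2) V₁ V₂),
    LinearMap.cancel_right LinearMap.snd_surjective]

end OneSum

theorem one_sum_cogirth_bound_general {V₁ V₂ : Type} [AddCommGroup V₁] [Module (ZMod 2) V₁]
    [AddCommGroup V₂] [Module (ZMod 2) V₂]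
    [Nontrivial V₁] [Nontrivial V₂]
    {ι₁ ι₂ : Type} [Fintype ι₁] [Fintype ι₂]
    (e₁ : ι₁ → V₁) (e₂ : ι₂ → V₂) :
    cogirth (Sum.elim (fun i => ((e₁ i, 0) : V₁ × V₂)) (fun j => ((0, e₂ j) : V₁ × V₂)))
        * (cogirth e₁ + cogirth e₂) ≤ cogirth e₁ * cogirth e₂ := by
  have hc₁ : 0 ≤ cogirth e₁ := cogirth_nonneg
  have hc₂ : 0 ≤ cogirth e₂ := cogirth_nonneg
  refine cogirth_mul_le_of_forall (e := oneSum e₁ e₂) (add_nonneg hc₁ hc₂) (mul_nonneg hc₁ hc₂) ?_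
  intro lam h0 h1
  have hmass : ∑ i, lam (Sum.inl i) + ∑ j, lam (Sum.inr j) = 1 := by
    rwa [← Fintype.sum_sum_type]
  have hle₁ : mWeight (oneSum e₁ e₂) lam ≤ (∑ i, lam (Sum.inl i)) * cogirth e₁ :=
    (mWeight_oneSum_le_left e₁ e₂ h0).trans (mWeight_le_sum_mul_cogirth fun i => h0 _)
  have hle₂ : mWeight (oneSum e₁ e₂) lam ≤ (∑ j, lam (Sum.inr j)) * cogirth e₂ :=
    (mWeight_oneSum_le_right e₁ e₂ h0).trans (mWeight_le_sum_mul_cogirth fun j => h0 _)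
  calc mWeight (oneSum e₁ e₂) lam * (cogirth e₁ + cogirth e₂)
      ≤ (∑ j, lam (Sum.inr j)) * cogirth e₂ * cogirth e₁
        + (∑ i, lam (Sum.inl i)) * cogirth e₁ * cogirth e₂ := by
        rw [mul_add]
        gcongr
    _ = cogirth e₁ * cogirth e₂ := by linear_combination cogirth e₁ * cogirth e₂ * hmass

/-- The `k = 1` case of Lemma 4.6 of the paper: the cogirth of the 1-sum of two spanning
families over `ZMod 2` satisfies `c(e)⁻¹ ≥ c(e¹)⁻¹ + c(e²)⁻¹`, written as
`c(e)·(c(e¹) + c(e²)) ≤ c(e¹)·c(e²)`. -/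
theorem one_sum_cogirth_bound {V₁ V₂ : Type} [AddCommGroup V₁] [Module (ZMod 2) V₁]
    [AddCommGroup V₂] [Module (ZMod 2) V₂]
    [FiniteDimensional (ZMod 2) V₁] [FiniteDimensional (ZMod 2) V₂]
    [Nontrivial V₁] [Nontrivial V₂]
    {ι₁ ι₂ : Type} [Fintype ι₁] [Fintype ι₂]
    (e₁ : ι₁ → V₁) (e₂ : ι₂ → V₂)
    (hspan₁ : Submodule.span (ZMod 2) (Set.range e₁) = ⊤)
    (hspan₂ : Submodule.span (ZMod 2) (Set.range e₂) = ⊤) :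
    cogirth (Sum.elim (fun i => ((e₁ i, 0) : V₁ × V₂)) (fun j => ((0, e₂ j) : V₁ × V₂)))
        * (cogirth e₁ + cogirth e₂) ≤ cogirth e₁ * cogirth e₂ :=
  one_sum_cogirth_bound_general e₁ e₂
end

section
/- (2-sum bound) Let V₁ and V₂ be finite-dimensional vector spaces over 𝔽₂ = ZMod 2, let e¹ : ι₁ → V₁ and e² : ι₂ → V₂ be finite families of vectors, and let i₁ ∈ ι₁, i₂ ∈ ι₂ be indices with v₁ = e¹_{i₁} ≠ 0 and v₂ = e²_{i₂} ≠ 0. Let V = (V₁ × V₂)/⟨(v₁, v₂)⟩, and let e be the family indexed by (ι₁ ∖ {i₁}) ⊕ (ι₂ ∖ {i₂}) whose values are the images in V of the vectors (e¹_i, 0) for i ≠ i₁ and (0, e²_j) for j ≠ i₂. For k = 1, 2 let e^{k′} be the family of images of (e^k_i)_{i ≠ i_k} in V_k/⟨v_k⟩, and assume V_k/⟨v_k⟩ ≠ 0 and that e^{k′} spans V_k/⟨v_k⟩. Then c(e) · (c(e^{1′}) + c(e^{2′})) ≤ c(e^{1′}) · c(e^{2′}); equivalently, c(e)⁻¹ ≥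 c(e^{1′})⁻¹ + c(e^{2′})⁻¹. -/
attribute [local instance] Classical.propDecidable

section Aux

variable {V : Type} [AddCommGroup V] [Module (ZMod 2) V] {ι : Type} [Fintype ι]

lemma aux_bddBelow (e : ι → V) {lam : ι → ℝ} (hlam : ∀ i, 0 ≤ lam i) :
    BddBelow {x : ℝ | ∃ v : V →ₗ[ZMod 2] ZMod 2, v ≠ 0 ∧
      x = ∑ i ∈ Finset.univ.filter (fun i => v (e i) ≠ 0), lam i} := by
  refine ⟨0, ?_⟩
  rintro x ⟨v, -, rfl⟩
  exact Finset.sum_nonneg fun i _ => hlam i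

lemma mWeight_nonneg_s14 (e : ι → V) {lam : ι → ℝ} (hlam : ∀ i, 0 ≤ lam i) :
    0 ≤ mWeight e lam := by
  apply Real.sInf_nonneg
  rintro x ⟨v, -, rfl⟩
  exact Finset.sum_nonneg fun i _ => hlam i

lemma mWeight_le (e : ι → V) {lam : ι → ℝ} (hlam : ∀ i, 0 ≤ lam i)
    {v : V →ₗ[ZMod 2] ZMod 2} (hv : v ≠ 0) :
    mWeight e lam ≤ ∑ i ∈ Finset.univ.filter (fun i => v (e i) ≠ 0), lam i :=
  csInf_le (aux_bddBelow e hlam) ⟨v, hv, rfl⟩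

lemma mWeight_le_one (e : ι → V) {lam : ι → ℝ} (hlam : ∀ i, 0 ≤ lam i)
    (hsum : ∑ i, lam i = 1) : mWeight e lam ≤ 1 := by
  by_cases h : ∃ v : V →ₗ[ZMod 2] ZMod 2, v ≠ 0
  · obtain ⟨v, hv⟩ := h
    refine (mWeight_le e hlam hv).trans ?_
    rw [← hsum]
    exact Finset.sum_le_sum_of_subset_of_nonneg (Finset.filter_subset _ _)
      (fun i _ _ => hlam i)
  · have : {x : ℝ | ∃ v : V →ₗ[ZMod 2] ZMod 2, v ≠ 0 ∧
        x = ∑ i ∈ Finset.univ.filter (fun i => v (e i) ≠ 0), lam i} = ∅ := by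
      ext x
      simp only [Set.mem_setOf_eq, Set.mem_empty_iff_false, iff_false]
      rintro ⟨v, hv, -⟩
      exact h ⟨v, hv⟩
    rw [mWeight, this, Real.sInf_empty]
    norm_num

lemma le_cogirth (e : ι → V) {lam : ι → ℝ} (hlam : ∀ i, 0 ≤ lam i)
    (hsum : ∑ i, lam i = 1) : mWeight e lam ≤ cogirth e := by
  apply le_csSup
  · refine ⟨1, ?_⟩
    rintro x ⟨lam', h0, h1, rfl⟩
    exact mWeight_le_one e h0 h1
  · exact ⟨lam, hlam, hsum, rfl⟩

lemma cogirth_le (e : ι → V) {B : ℝ} (hB : 0 ≤ B)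
    (h : ∀ lam : ι → ℝ, (∀ i, 0 ≤ lam i) → ∑ i, lam i = 1 → mWeight e lam ≤ B) :
    cogirth e ≤ B := by
  apply Real.sSup_le _ hB
  rintro x ⟨lam, h0, h1, rfl⟩
  exact h lam h0 h1

lemma exists_dual_ne_zero [Nontrivial V] : ∃ φ : V →ₗ[ZMod 2] ZMod 2, φ ≠ 0 := by
  obtain ⟨v, hv⟩ := exists_ne (0 : V)
  by_contra h
  push_neg at h
  exact hv ((Module.forall_dual_apply_eq_zero_iff (ZMod 2) v).mp
    (fun φ => by rw [h φ]; rfl))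

lemma exists_mWeight_min [FiniteDimensional (ZMod 2) V] [Nontrivial V]
    (e : ι → V) (lam : ι → ℝ) :
    ∃ v : V →ₗ[ZMod 2] ZMod 2, v ≠ 0 ∧
      (∑ i ∈ Finset.univ.filter (fun i => v (e i) ≠ 0), lam i) = mWeight e lam := by
  have hfinV : Finite V := Module.finite_of_finite (ZMod 2)
  have hfin : Finite (V →ₗ[ZMod 2] ZMod 2) :=
    Finite.of_injective _ DFunLike.coe_injective
  set S := {x : ℝ | ∃ v : V →ₗ[ZMod 2] ZMod 2, v ≠ 0 ∧
      x = ∑ i ∈ Finset.univ.filter (fun i => v (e i) ≠ 0), lam i} with hS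
  have hSfin : S.Finite := by
    have hsub : S ⊆ (fun v : V →ₗ[ZMod 2] ZMod 2 =>
        ∑ i ∈ Finset.univ.filter (fun i => v (e i) ≠ 0), lam i) '' Set.univ := by
      rintro x ⟨v, hv, rfl⟩
      exact ⟨v, trivial, rfl⟩
    exact (Set.finite_univ.image _).subset hsub
  have hne : S.Nonempty := by
    obtain ⟨φ, hφ⟩ := exists_dual_ne_zero (V := V)
    exact ⟨_, φ, hφ, rfl⟩
  have hmem : sInf S ∈ S := hne.csInf_mem hSfin
  obtain ⟨v, hv, hx⟩ := hmem
  exact ⟨v, hv, hx.symm⟩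

lemma cogirth_pos [FiniteDimensional (ZMod 2) V] [Nontrivial V] (e : ι → V)
    (hspan : Submodule.span (ZMod 2) (Set.range e) = ⊤) : 0 < cogirth e := by
  have hne : Nonempty ι := by
    by_contra h
    rw [not_nonempty_iff] at h
    rw [Set.range_eq_empty, Submodule.span_empty] at hspan
    exact bot_ne_top hspan
  have hcard : 0 < (Fintype.card ι : ℝ) := by
    exact_mod_cast Fintype.card_pos
  set lam : ι → ℝ := fun _ => 1 / Fintype.card ι with hlamdef
  have hlam : ∀ i, 0 ≤ lam i := fun i => by positivity
  have hsum : ∑ i, lam i = 1 := by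
    simp only [hlamdef, Finset.sum_const, Finset.card_univ, nsmul_eq_mul]
    field_simp
  have hlow : 1 / (Fintype.card ι : ℝ) ≤ mWeight e lam := by
    obtain ⟨φ, hφ⟩ := exists_dual_ne_zero (V := V)
    rw [mWeight]
    refine le_csInf ⟨∑ i ∈ Finset.univ.filter (fun i => φ (e i) ≠ 0), lam i, φ, hφ, rfl⟩ ?_
    rintro x ⟨v, hv, rfl⟩
    have hex : ∃ i, v (e i) ≠ 0 := by
      by_contra hc
      push_neg at hc
      apply hv
      apply LinearMap.ext_on hspan
      rintro x ⟨i, rfl⟩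
      simpa using hc i
    obtain ⟨i₀, hi₀⟩ := hex
    calc 1 / (Fintype.card ι : ℝ) = lam i₀ := rfl
      _ ≤ _ := Finset.single_le_sum (f := lam) (fun i _ => hlam i)
          (Finset.mem_filter.mpr ⟨Finset.mem_univ _, hi₀⟩)
  calc (0:ℝ) < 1 / (Fintype.card ι : ℝ) := by positivity
    _ ≤ mWeight e lam := hlow
    _ ≤ cogirth e := le_cogirth e hlam hsum

end Aux

attribute [local instance] Classical.propDecidable

lemma mWeight_comp_equiv {V : Type} [AddCommGroup V] [Module (ZMod 2) V]
    {ι ι' : Type} [Fintype ι] [Fintype ι'] (σ : ι' ≃ ι) (e : ι → V) (lam : ι → ℝ) :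
    mWeight (e ∘ σ) (lam ∘ σ) = mWeight e lam := by
  have hsum : ∀ v : V →ₗ[ZMod 2] ZMod 2,
      ∑ i ∈ Finset.univ.filter (fun i => v ((e ∘ σ) i) ≠ 0), (lam ∘ σ) i
        = ∑ i ∈ Finset.univ.filter (fun i => v (e i) ≠ 0), lam i := fun v =>
    Finset.sum_equiv σ (by simp) (by simp)
  unfold mWeight
  congr 1
  ext x
  simp only [Set.mem_setOf_eq]
  exact ⟨fun ⟨v, hv, hx⟩ => ⟨v, hv, hx.trans (hsum v)⟩,
    fun ⟨v, hv, hx⟩ => ⟨v, hv, hx.trans (hsum v).symm⟩⟩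

lemma key_bound {Q V' : Type} [AddCommGroup Q] [Module (ZMod 2) Q]
    [AddCommGroup V'] [Module (ZMod 2) V'] [FiniteDimensional (ZMod 2) V'] [Nontrivial V']
    {α β : Type} [Fintype α] [Fintype β]
    (φ : Q →ₗ[ZMod 2] V') (hφ : Function.Surjective φ)
    (e : α ⊕ β → Q) (e' : α → V')
    (h1 : ∀ a, φ (e (Sum.inl a)) = e' a) (h2 : ∀ b, φ (e (Sum.inr b)) = 0)
    (lam : α ⊕ β → ℝ) (hlam : ∀ x, 0 ≤ lam x) :
    mWeight e lam ≤ (∑ a, lam (Sum.inl a)) * cogirth e' := by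
  set s := ∑ a, lam (Sum.inl a) with hs
  have hs0 : 0 ≤ s := Finset.sum_nonneg fun a _ => hlam _
  have weight_eq : ∀ u : V' →ₗ[ZMod 2] ZMod 2,
      (∑ i ∈ Finset.univ.filter (fun i => (u ∘ₗ φ) (e i) ≠ 0), lam i)
        = ∑ a ∈ Finset.univ.filter (fun a => u (e' a) ≠ 0), lam (Sum.inl a) := by
    intro u
    rw [Finset.sum_filter, Finset.sum_filter, Fintype.sum_sum_type]
    have hr : ∀ b : β, (if (u ∘ₗ φ) (e (Sum.inr b)) ≠ 0 then lam (Sum.inr b) else 0) = 0 := by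
      intro b
      simp [LinearMap.comp_apply, h2 b]
    have hl : ∀ a : α, (if (u ∘ₗ φ) (e (Sum.inl a)) ≠ 0 then lam (Sum.inl a) else 0)
        = (if u (e' a) ≠ 0 then lam (Sum.inl a) else 0) := by
      intro a
      simp [LinearMap.comp_apply, h1 a]
    rw [Finset.sum_congr rfl (fun b _ => hr b), Finset.sum_congr rfl (fun a _ => hl a)]
    simp
  have hne0 : ∀ u : V' →ₗ[ZMod 2] ZMod 2, u ≠ 0 → u ∘ₗ φ ≠ 0 := by
    intro u hu hc
    apply hu
    ext y
    obtain ⟨x, rfl⟩ := hφ y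
    simpa using DFunLike.congr_fun hc x
  rcases eq_or_lt_of_le hs0 with hz | hp
  · -- s = 0
    obtain ⟨u, hu⟩ := exists_dual_ne_zero (V := V')
    have hall : ∀ a : α, lam (Sum.inl a) = 0 := by
      intro a
      have := (Finset.sum_eq_zero_iff_of_nonneg (fun a _ => hlam (Sum.inl a))).mp hz.symm
      exact this a (Finset.mem_univ a)
    have : mWeight e lam ≤ 0 := by
      refine (mWeight_le e hlam (hne0 u hu)).trans ?_
      rw [weight_eq u]
      exact le_of_eq (Finset.sum_eq_zero fun a _ => hall a)
    calc mWeight e lam ≤ 0 := this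
      _ = s * cogirth e' := by rw [← hz, zero_mul]
  · -- 0 < s
    set lam₁ : α → ℝ := fun a => lam (Sum.inl a) / s with hlam₁
    have hlam₁0 : ∀ a, 0 ≤ lam₁ a := fun a => div_nonneg (hlam _) hs0
    have hlam₁sum : ∑ a, lam₁ a = 1 := by
      rw [hlam₁, ← Finset.sum_div, ← hs, div_self hp.ne']
    obtain ⟨u, hu, humin⟩ := exists_mWeight_min e' lam₁
    have hule : (∑ a ∈ Finset.univ.filter (fun a => u (e' a) ≠ 0), lam₁ a) ≤ cogirth e' :=
      humin.symm ▸ humin ▸ (humin ▸ le_cogirth e' hlam₁0 hlam₁sum)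
    refine (mWeight_le e hlam (hne0 u hu)).trans ?_
    rw [weight_eq u]
    have : ∑ a ∈ Finset.univ.filter (fun a => u (e' a) ≠ 0), lam (Sum.inl a)
        = s * ∑ a ∈ Finset.univ.filter (fun a => u (e' a) ≠ 0), lam₁ a := by
      rw [Finset.mul_sum]
      refine Finset.sum_congr rfl fun a _ => ?_
      rw [hlam₁]
      field_simp
    rw [this]
    exact mul_le_mul_of_nonneg_left hule hs0

attribute [local instance] Classical.propDecidable


/-- The `k = 2` case of Lemma 4.6 of the paper: the cogirth of the 2-sum at nonzero
vectors `v₁ = e₁ i₁`, `v₂ = e₂ i₂` satisfies `c(e)·(c(e¹′) + c(e²′)) ≤ c(e¹′)·c(e²′)`,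
i.e. `c(e)⁻¹ ≥ c(e¹′)⁻¹ + c(e²′)⁻¹`. -/
theorem two_sum_cogirth_bound {V₁ V₂ : Type} [AddCommGroup V₁] [Module (ZMod 2) V₁]
    [AddCommGroup V₂] [Module (ZMod 2) V₂]
    [FiniteDimensional (ZMod 2) V₁] [FiniteDimensional (ZMod 2) V₂]
    {ι₁ ι₂ : Type} [Fintype ι₁] [Fintype ι₂]
    (e₁ : ι₁ → V₁) (e₂ : ι₂ → V₂) (i₁ : ι₁) (i₂ : ι₂)
    (hv₁ : e₁ i₁ ≠ 0) (hv₂ : e₂ i₂ ≠ 0)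
    (e : {i : ι₁ // i ≠ i₁} ⊕ {j : ι₂ // j ≠ i₂} →
      (V₁ × V₂) ⧸ Submodule.span (ZMod 2) ({(e₁ i₁, e₂ i₂)} : Set (V₁ × V₂)))
    (he : e = Sum.elim
      (fun i => Submodule.Quotient.mk ((e₁ i.1, 0) : V₁ × V₂))
      (fun j => Submodule.Quotient.mk ((0, e₂ j.1) : V₁ × V₂)))
    (e₁' : {i : ι₁ // i ≠ i₁} → V₁ ⧸ Submodule.span (ZMod 2) ({e₁ i₁} : Set V₁))
    (he₁' : e₁' = fun i => Submodule.Quotient.mk (e₁ i.1))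
    (e₂' : {j : ι₂ // j ≠ i₂} → V₂ ⧸ Submodule.span (ZMod 2) ({e₂ i₂} : Set V₂))
    (he₂' : e₂' = fun j => Submodule.Quotient.mk (e₂ j.1))
    (hnt₁ : Nontrivial (V₁ ⧸ Submodule.span (ZMod 2) ({e₁ i₁} : Set V₁)))
    (hnt₂ : Nontrivial (V₂ ⧸ Submodule.span (ZMod 2) ({e₂ i₂} : Set V₂)))
    (hspan₁ : Submodule.span (ZMod 2) (Set.range e₁') = ⊤)
    (hspan₂ : Submodule.span (ZMod 2) (Set.range e₂') = ⊤) :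
    cogirth e * (cogirth e₁' + cogirth e₂') ≤ cogirth e₁' * cogirth e₂' := by
  have hker₁ : Submodule.span (ZMod 2) ({(e₁ i₁, e₂ i₂)} : Set (V₁ × V₂)) ≤
      LinearMap.ker ((Submodule.span (ZMod 2) ({e₁ i₁} : Set V₁)).mkQ ∘ₗ
        LinearMap.fst (ZMod 2) V₁ V₂) := by
    rw [Submodule.span_le, Set.singleton_subset_iff]
    simp only [SetLike.mem_coe, LinearMap.mem_ker, LinearMap.comp_apply,
      LinearMap.fst_apply, Submodule.mkQ_apply]
    rw [Submodule.Quotient.mk_eq_zero]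
    exact Submodule.mem_span_singleton_self _
  have hker₂ : Submodule.span (ZMod 2) ({(e₁ i₁, e₂ i₂)} : Set (V₁ × V₂)) ≤
      LinearMap.ker ((Submodule.span (ZMod 2) ({e₂ i₂} : Set V₂)).mkQ ∘ₗ
        LinearMap.snd (ZMod 2) V₁ V₂) := by
    rw [Submodule.span_le, Set.singleton_subset_iff]
    simp only [SetLike.mem_coe, LinearMap.mem_ker, LinearMap.comp_apply,
      LinearMap.snd_apply, Submodule.mkQ_apply]
    rw [Submodule.Quotient.mk_eq_zero]
    exact Submodule.mem_span_singleton_self _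
  let φ₁ : ((V₁ × V₂) ⧸ Submodule.span (ZMod 2) ({(e₁ i₁, e₂ i₂)} : Set (V₁ × V₂)))
      →ₗ[ZMod 2] V₁ ⧸ Submodule.span (ZMod 2) ({e₁ i₁} : Set V₁) :=
    (Submodule.span (ZMod 2) ({(e₁ i₁, e₂ i₂)} : Set (V₁ × V₂))).liftQ
      ((Submodule.span (ZMod 2) ({e₁ i₁} : Set V₁)).mkQ ∘ₗ LinearMap.fst (ZMod 2) V₁ V₂) hker₁
  let φ₂ : ((V₁ × V₂) ⧸ Submodule.span (ZMod 2) ({(e₁ i₁, e₂ i₂)} : Set (V₁ × V₂)))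
      →ₗ[ZMod 2] V₂ ⧸ Submodule.span (ZMod 2) ({e₂ i₂} : Set V₂) :=
    (Submodule.span (ZMod 2) ({(e₁ i₁, e₂ i₂)} : Set (V₁ × V₂))).liftQ
      ((Submodule.span (ZMod 2) ({e₂ i₂} : Set V₂)).mkQ ∘ₗ LinearMap.snd (ZMod 2) V₁ V₂) hker₂
  have hφ₁surj : Function.Surjective φ₁ := by
    intro y
    obtain ⟨w, rfl⟩ := Submodule.Quotient.mk_surjective _ y
    exact ⟨Submodule.Quotient.mk (w, 0), by
      show ((Submodule.span (ZMod 2) _).liftQ _ hker₁) (Submodule.Quotient.mk (w, 0)) = _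
      rw [Submodule.liftQ_apply]; rfl⟩
  have hφ₂surj : Function.Surjective φ₂ := by
    intro y
    obtain ⟨w, rfl⟩ := Submodule.Quotient.mk_surjective _ y
    exact ⟨Submodule.Quotient.mk (0, w), by
      show ((Submodule.span (ZMod 2) _).liftQ _ hker₂) (Submodule.Quotient.mk (0, w)) = _
      rw [Submodule.liftQ_apply]; rfl⟩
  have h11 : ∀ a : {i : ι₁ // i ≠ i₁}, φ₁ (e (Sum.inl a)) = e₁' a := by
    intro a
    rw [he, he₁']
    show ((Submodule.span (ZMod 2) _).liftQ _ hker₁)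
      (Submodule.Quotient.mk ((e₁ a.1, 0) : V₁ × V₂)) = _
    rw [Submodule.liftQ_apply]; rfl
  have h12 : ∀ b : {j : ι₂ // j ≠ i₂}, φ₁ (e (Sum.inr b)) = 0 := by
    intro b
    rw [he]
    show ((Submodule.span (ZMod 2) _).liftQ _ hker₁)
      (Submodule.Quotient.mk ((0, e₂ b.1) : V₁ × V₂)) = 0
    rw [Submodule.liftQ_apply]
    simp
  have h21 : ∀ b : {j : ι₂ // j ≠ i₂}, φ₂ (e (Sum.inr b)) = e₂' b := by
    intro b
    rw [he, he₂']
    show ((Submodule.span (ZMod 2) _).liftQ _ hker₂)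
      (Submodule.Quotient.mk ((0, e₂ b.1) : V₁ × V₂)) = _
    rw [Submodule.liftQ_apply]; rfl
  have h22 : ∀ a : {i : ι₁ // i ≠ i₁}, φ₂ (e (Sum.inl a)) = 0 := by
    intro a
    rw [he]
    show ((Submodule.span (ZMod 2) _).liftQ _ hker₂)
      (Submodule.Quotient.mk ((e₁ a.1, 0) : V₁ × V₂)) = 0
    rw [Submodule.liftQ_apply]
    simp
  have hc₁ : 0 < cogirth e₁' := cogirth_pos e₁' hspan₁
  have hc₂ : 0 < cogirth e₂' := cogirth_pos e₂' hspan₂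
  have hc12 : 0 < cogirth e₁' + cogirth e₂' := add_pos hc₁ hc₂
  have main : ∀ lam : ({i : ι₁ // i ≠ i₁} ⊕ {j : ι₂ // j ≠ i₂}) → ℝ,
      (∀ x, 0 ≤ lam x) → (∑ x, lam x = 1) →
      mWeight e lam * (cogirth e₁' + cogirth e₂') ≤ cogirth e₁' * cogirth e₂' := by
    intro lam h0 h1s
    have b1 : mWeight e lam ≤ (∑ a, lam (Sum.inl a)) * cogirth e₁' :=
      key_bound φ₁ hφ₁surj e e₁' h11 h12 lam h0
    have b2 : mWeight e lam ≤ (∑ b, lam (Sum.inr b)) * cogirth e₂' := by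
      have hkey := key_bound φ₂ hφ₂surj
        (e ∘ (Equiv.sumComm {j : ι₂ // j ≠ i₂} {i : ι₁ // i ≠ i₁})) e₂'
        (fun b => by simpa using h21 b)
        (fun a => by simpa using h22 a)
        (lam ∘ (Equiv.sumComm {j : ι₂ // j ≠ i₂} {i : ι₁ // i ≠ i₁}))
        (fun x => h0 _)
      rw [mWeight_comp_equiv (Equiv.sumComm {j : ι₂ // j ≠ i₂} {i : ι₁ // i ≠ i₁}) e lam]
        at hkey
      simpa using hkey
    have hst : (∑ a, lam (Sum.inl a)) + (∑ b, lam (Sum.inr b)) = 1 := by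
      rw [← Fintype.sum_sum_type]
      exact h1s
    calc mWeight e lam * (cogirth e₁' + cogirth e₂')
        = mWeight e lam * cogirth e₂' + mWeight e lam * cogirth e₁' := by ring
      _ ≤ ((∑ a, lam (Sum.inl a)) * cogirth e₁') * cogirth e₂'
          + ((∑ b, lam (Sum.inr b)) * cogirth e₂') * cogirth e₁' :=
        add_le_add (mul_le_mul_of_nonneg_right b1 hc₂.le)
          (mul_le_mul_of_nonneg_right b2 hc₁.le)
      _ = ((∑ a, lam (Sum.inl a)) + (∑ b, lam (Sum.inr b)))
          * (cogirth e₁' * cogirth e₂') := by ring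
      _ = cogirth e₁' * cogirth e₂' := by rw [hst, one_mul]
  have hB : cogirth e ≤ (cogirth e₁' * cogirth e₂') / (cogirth e₁' + cogirth e₂') := by
    refine cogirth_le e (div_nonneg (mul_nonneg hc₁.le hc₂.le) hc12.le) ?_
    intro lam h0 h1s
    exact (le_div_iff₀ hc12).mpr (main lam h0 h1s)
  exact (le_div_iff₀ hc12).mp hB
end

section
/- Let V₁ and V₂ be nonzero finite-dimensional vector spaces over 𝔽₂ = ZMod 2, let E₁ ⊆ V₁ and E₂ ⊆ V₂ be finite subsets, and let v₁ ∈ E₁ and v₂ ∈ E₂ be nonzero vectors. Suppose that for k = 1, 2 there are n_k ≥ 2 pairwise distinct codimension-one subspaces of V_k such that every element of E_k lies in at least n_k − 2 of them. Let V = (V₁ × V₂)/⟨(v₁, v₂)⟩ and let E ⊆ V be the set of images of the vectors (x, 0) for x ∈ E₁ ∖ {v₁} together with the images of (0, y) for y ∈ E₂ ∖ {v₂}. Then there exist n₁ + n₂ − 2 pairwise distinct codimension-one subspaces of V such that every element of E lies in at least n₁ + n₂ − 4 of them. -/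
attribute [local instance] Classical.propDecidable

/-!
Over `𝔽₂` every hyperplane is the kernel of exactly one nonzero functional, so `n` distinct
hyperplanes are `n` nonzero functionals, and `x` lies in all but at most two of them when at
most two of them are nonzero at `x`. Functionals on `(V₁ × V₂) ⧸ ⟨(v₁, v₂)⟩` are the
`f ⊕ g` with `f v₁ + g v₂ = 0`. Take `f ⊕ 0` for the `f` vanishing at `v₁`, `0 ⊕ g` for the `g`
vanishing at `v₂`, and `f ⊕ g` for `f`, `g` paired by a matching between the (at most two)
functionals with `f v₁ = 1` and those with `g v₂ = 1`, where `1 + 1 = 0` is used. At most two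
functionals are left unmatched, and since every `f` and every `g` is used at most once, `(x, 0)`
and `(0, y)` are still nonzero at no more than two of the new functionals.
-/

open Module Finset

namespace Finset

variable {α β : Type*}

theorem exists_matching (A : Finset α) (B : Finset β) {k : ℕ} (hA : k ≤ #A) (hB : k ≤ #B) :
    ∃ M ⊆ A ×ˢ B, #M = k ∧
      Set.InjOn Prod.fst (M : Set (α × β)) ∧ Set.InjOn Prod.snd (M : Set (α × β)) := by
  obtain ⟨a⟩ : Nonempty (Fin k ↪ A) := Function.Embedding.nonempty_of_card_le (by simpa)
  obtain ⟨b⟩ : Nonempty (Fin k ↪ B) := Function.Embedding.nonempty_of_card_le (by simpa)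
  have ha : Function.Injective fun i => (a i : α) := Subtype.val_injective.comp a.injective
  have hb : Function.Injective fun i => (b i : β) := Subtype.val_injective.comp b.injective
  refine ⟨univ.image fun i => ((a i : α), (b i : β)), ?_, ?_, ?_, ?_⟩
  · simp [subset_iff]
  · rw [card_image_of_injective _ fun i j h => ha (congrArg Prod.fst h), card_univ,
      Fintype.card_fin]
  · simp only [coe_image, coe_univ, Set.image_univ]
    rintro _ ⟨i, rfl⟩ _ ⟨j, rfl⟩ h
    rw [ha h]
  · simp only [coe_image, coe_univ, Set.image_univ]
    rintro _ ⟨i, rfl⟩ _ ⟨j, rfl⟩ h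
    rw [hb h]

variable [Zero α] [Zero β] [DecidableEq α] [DecidableEq β]

/-- The pairs of a matching `M`, together with the elements of `D₁` and of `D₂`, each paired
with `0`, which stands for "no partner". -/
def glue (M : Finset (α × β)) (D₁ : Finset α) (D₂ : Finset β) : Finset (α × β) :=
  M ∪ D₁ ×ˢ {0} ∪ {0} ×ˢ D₂

variable {M : Finset (α × β)} {D₁ : Finset α} {D₂ : Finset β}

@[simp]
theorem mem_glue {t : α × β} :
    t ∈ glue M D₁ D₂ ↔ t ∈ M ∨ t.1 ∈ D₁ ∧ t.2 = 0 ∨ t.1 = 0 ∧ t.2 ∈ D₂ := by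
  simp only [glue, mem_union, mem_product, mem_singleton, or_assoc]

theorem zero_notMem_glue (hM : ∀ t ∈ M, t.1 ≠ 0) (hD₁ : 0 ∉ D₁) (hD₂ : 0 ∉ D₂) :
    (0, 0) ∉ glue M D₁ D₂ := by
  simp only [mem_glue, and_true, true_and, not_or]
  exact ⟨fun h => hM _ h rfl, hD₁, hD₂⟩

theorem card_glue (hM₁ : ∀ t ∈ M, t.1 ≠ 0) (hM₂ : ∀ t ∈ M, t.2 ≠ 0) (hD₁ : 0 ∉ D₁) :
    #(glue M D₁ D₂) = #M + #D₁ + #D₂ := by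
  rw [glue, card_union_of_disjoint, card_union_of_disjoint, card_product, card_product,
    card_singleton, card_singleton, mul_one, one_mul]
  · rw [disjoint_left]; aesop
  · rw [disjoint_left]; aesop

theorem card_filter_fst_glue_le {S : Finset α} {P : α → Prop} [DecidablePred P] (hP : ¬ P 0)
    (hM : Set.InjOn Prod.fst (M : Set (α × β))) (hMS : ∀ t ∈ M, t.1 ∈ S)
    (hMD : ∀ t ∈ M, t.1 ∉ D₁) (hDS : D₁ ⊆ S) :
    #{t ∈ glue M D₁ D₂ | P t.1} ≤ #{a ∈ S | P a} := by
  refine card_le_card_of_injOn Prod.fst ?_ ?_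
  · intro t ht
    simp only [coe_filter, mem_glue, Set.mem_ofPred_eq] at ht ⊢
    grind
  · intro t ht t' ht' h
    simp only [coe_filter, mem_glue, Set.mem_ofPred_eq] at ht ht'
    grind [Set.InjOn]

theorem card_filter_snd_glue_le {S : Finset β} {P : β → Prop} [DecidablePred P] (hP : ¬ P 0)
    (hM : Set.InjOn Prod.snd (M : Set (α × β))) (hMS : ∀ t ∈ M, t.2 ∈ S)
    (hMD : ∀ t ∈ M, t.2 ∉ D₂) (hDS : D₂ ⊆ S) :
    #{t ∈ glue M D₁ D₂ | P t.2} ≤ #{b ∈ S | P b} := by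
  refine card_le_card_of_injOn Prod.snd ?_ ?_
  · intro t ht
    simp only [coe_filter, mem_glue, Set.mem_ofPred_eq] at ht ⊢
    grind
  · intro t ht t' ht' h
    simp only [coe_filter, mem_glue, Set.mem_ofPred_eq] at ht ht'
    grind [Set.InjOn]

end Finset

theorem zmod_two_add_eq_zero {a b : ZMod 2} (ha : a ≠ 0) (hb : b ≠ 0) : a + b = 0 := by
  revert a b; decide

theorem zmod_two_eq_of_eq_zero_iff {a b : ZMod 2} (h : a = 0 ↔ b = 0) : a = b := by
  revert a b; decide

section Field

variable {K V : Type*} [Field K] [AddCommGroup V] [Module K V] [FiniteDimensional K V]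

theorem Module.Dual.finrank_ker_add_one_eq_iff (f : Dual K V) :
    finrank K (LinearMap.ker f) + 1 = finrank K V ↔ f ≠ 0 := by
  refine ⟨?_, fun hf => finrank_ker_add_one_of_ne_zero hf⟩
  rintro h rfl
  rw [LinearMap.ker_zero, finrank_top] at h
  omega

theorem Module.Dual.exists_ker_eq {U : Submodule K V} (h : finrank K U + 1 = finrank K V) :
    ∃ f : Dual K V, LinearMap.ker f = U := by
  have hquot : finrank K (V ⧸ U) = finrank K K := by
    have := U.finrank_quotient_add_finrank
    rw [finrank_self]
    omega
  let e := LinearEquiv.ofFinrankEq _ _ hquot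
  exact ⟨e.toLinearMap ∘ₗ U.mkQ, by
    rw [LinearMap.ker_comp, LinearEquiv.ker, Submodule.comap_bot, Submodule.ker_mkQ]⟩

end Field

section MissesAtMostTwo

variable {R V W V₁ V₂ : Type*} [CommRing R] [DecidableEq R] [AddCommGroup V] [Module R V]
  [AddCommGroup W] [Module R W] [AddCommGroup V₁] [Module R V₁] [AddCommGroup V₂] [Module R V₂]

/-- `S` encodes a family of hyperplanes `ker φ`, `φ ∈ S`, and every `x ∈ E` lies off at most
two of them. -/
def MissesAtMostTwo (S : Finset (Dual R V)) (E : Set V) : Prop :=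
  0 ∉ S ∧ ∀ x ∈ E, #{φ ∈ S | φ x ≠ 0} ≤ 2

theorem MissesAtMostTwo.mono {S S' : Finset (Dual R V)} {E E' : Set V}
    (h : MissesAtMostTwo S' E') (hS : S ⊆ S') (hE : E ⊆ E') : MissesAtMostTwo S E :=
  ⟨fun h0 => h.1 (hS h0), fun x hx =>
    (card_le_card (filter_subset_filter _ hS)).trans (h.2 x (hE hx))⟩

theorem missesAtMostTwo_image_iff {n : ℕ} {f : Fin n → Dual R V} (hf : Function.Injective f)
    {E : Set V} :
    MissesAtMostTwo (univ.image f) E ↔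
      (∀ k, f k ≠ 0) ∧ ∀ x ∈ E, n ≤ #{k | x ∈ LinearMap.ker (f k)} + 2 := by
  have h0 : (0 ∉ univ.image f) ↔ ∀ k, f k ≠ 0 := by simp
  simp only [MissesAtMostTwo, h0, filter_image, card_image_of_injective _ hf]
  refine and_congr_right fun _ => forall₂_congr fun x _ => ?_
  have := card_filter_add_card_filter_not (s := univ) fun k => x ∈ LinearMap.ker (f k)
  simp only [LinearMap.mem_ker, ne_eq, card_univ, Fintype.card_fin] at this ⊢
  omega

theorem missesAtMostTwo_image_dualMap_iff {L : V →ₗ[R] W} (hL : Function.Surjective L)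
    {S : Finset (Dual R W)} {E : Set V} :
    MissesAtMostTwo (S.image L.dualMap) E ↔ MissesAtMostTwo S (L '' E) := by
  have hinj := LinearMap.dualMap_injective_of_surjective hL
  have h0 : (0 ∈ S.image L.dualMap) ↔ 0 ∈ S := by
    rw [← map_zero L.dualMap, hinj.mem_finset_image]
  simp only [MissesAtMostTwo, h0, Set.forall_mem_image, filter_image,
    card_image_of_injective _ hinj]
  rfl

theorem exists_missesAtMostTwo_quotient (p : Submodule R V) {T : Finset (Dual R V)} {E : Set V}
    (hT : MissesAtMostTwo T E) (hTp : ∀ φ ∈ T, φ ∈ p.dualAnnihilator) :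
    ∃ S : Finset (Dual R (V ⧸ p)), #S = #T ∧ MissesAtMostTwo S (p.mkQ '' E) := by
  have hrange : ↑T ⊆ p.mkQ.dualMap '' Set.univ := by
    rw [Set.image_univ, ← LinearMap.coe_range, Submodule.range_dualMap_mkQ_eq]
    exact hTp
  obtain ⟨S, -, rfl⟩ := Finset.subset_set_image_iff.mp hrange
  refine ⟨S, (card_image_of_injective _
    (LinearMap.dualMap_injective_of_surjective p.mkQ_surjective)).symm, ?_⟩
  exact (missesAtMostTwo_image_dualMap_iff p.mkQ_surjective).mp hT

theorem missesAtMostTwo_map_dualProdDualEquivDual {T : Finset (Dual R V₁ × Dual R V₂)}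
    {E₁ : Set V₁} {E₂ : Set V₂} (h0 : (0, 0) ∉ T) (h₁ : ∀ x ∈ E₁, #{t ∈ T | t.1 x ≠ 0} ≤ 2)
    (h₂ : ∀ y ∈ E₂, #{t ∈ T | t.2 y ≠ 0} ≤ 2) :
    MissesAtMostTwo (T.map (dualProdDualEquivDual R V₁ V₂).toEquiv.toEmbedding)
      ((fun x => (x, 0)) '' E₁ ∪ (fun y => (0, y)) '' E₂) := by
  refine ⟨?_, ?_⟩
  · simpa [map_eq_zero_iff] using h0
  · rintro _ (⟨x, hx, rfl⟩ | ⟨y, hy, rfl⟩)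
    · simpa [filter_map, Function.comp_def] using h₁ x hx
    · simpa [filter_map, Function.comp_def] using h₂ y hy

end MissesAtMostTwo

section ZModTwo

variable {V V₁ V₂ : Type*} [AddCommGroup V] [Module (ZMod 2) V]
  [AddCommGroup V₁] [Module (ZMod 2) V₁] [AddCommGroup V₂] [Module (ZMod 2) V₂]

theorem Module.Dual.ker_injective_zmod_two :
    Function.Injective fun f : Dual (ZMod 2) V => LinearMap.ker f := by
  intro f g h
  ext x
  exact zmod_two_eq_of_eq_zero_iff (by simpa only [LinearMap.mem_ker] using SetLike.ext_iff.mp h x)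

theorem exists_hyperplanes_iff_exists_missesAtMostTwo [FiniteDimensional (ZMod 2) V]
    (E : Set V) (n : ℕ) :
    (∃ U : Fin n → Submodule (ZMod 2) V, Function.Injective U ∧
      (∀ k, finrank (ZMod 2) (U k) + 1 = finrank (ZMod 2) V) ∧
      ∀ x ∈ E, n ≤ #{k | x ∈ U k} + 2) ↔
    ∃ S : Finset (Dual (ZMod 2) V), #S = n ∧ MissesAtMostTwo S E := by
  constructor
  · rintro ⟨U, hU, hrank, hE⟩
    choose f hf using fun k => Dual.exists_ker_eq (hrank k)
    obtain rfl : U = fun k => LinearMap.ker (f k) := funext fun k => (hf k).symm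
    have hfinj : Function.Injective f := hU.of_comp (f := fun g => LinearMap.ker g)
    refine ⟨univ.image f, by rw [card_image_of_injective _ hfinj, card_univ, Fintype.card_fin], ?_⟩
    rw [missesAtMostTwo_image_iff hfinj]
    simp only [Dual.finrank_ker_add_one_eq_iff] at hrank
    exact ⟨hrank, hE⟩
  · rintro ⟨S, rfl, hS⟩
    set f : Fin #S → Dual (ZMod 2) V := fun k => S.equivFin.symm k
    have hfinj : Function.Injective f := Subtype.val_injective.comp S.equivFin.symm.injective
    have hfS : univ.image f = S := by
      ext φ
      refine ⟨?_, fun hφ => mem_image.mpr ⟨S.equivFin ⟨φ, hφ⟩, mem_univ _, by simp [f]⟩⟩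
      intro hφ
      obtain ⟨k, -, rfl⟩ := mem_image.mp hφ
      exact (S.equivFin.symm k).2
    rw [← hfS, missesAtMostTwo_image_iff hfinj] at hS
    refine ⟨fun k => LinearMap.ker (f k), Dual.ker_injective_zmod_two.comp hfinj, ?_⟩
    simp only [Dual.finrank_ker_add_one_eq_iff]
    exact hS

theorem exists_missesAtMostTwo_prod {S₁ : Finset (Dual (ZMod 2) V₁)}
    {S₂ : Finset (Dual (ZMod 2) V₂)} {E₁ : Set V₁} {E₂ : Set V₂} {v₁ : V₁} {v₂ : V₂}
    (h₁ : MissesAtMostTwo S₁ E₁) (h₂ : MissesAtMostTwo S₂ E₂) (hv₁ : v₁ ∈ E₁) (hv₂ : v₂ ∈ E₂) :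
    ∃ T : Finset (Dual (ZMod 2) (V₁ × V₂)), #S₁ + #S₂ ≤ #T + 2 ∧ (∀ φ ∈ T, φ (v₁, v₂) = 0) ∧
      MissesAtMostTwo T ((fun x => (x, 0)) '' E₁ ∪ (fun y => (0, y)) '' E₂) := by
  set A := S₁.filter (· v₁ ≠ 0)
  set B := S₂.filter (· v₂ ≠ 0)
  set Z₁ := S₁.filter (· v₁ = 0)
  set Z₂ := S₂.filter (· v₂ = 0)
  obtain ⟨M, hMAB, hMcard, hM₁, hM₂⟩ :=
    exists_matching A B (min_le_left #A #B) (min_le_right #A #B)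
  have hM : ∀ t ∈ M, (t.1 ∈ S₁ ∧ t.1 v₁ ≠ 0) ∧ (t.2 ∈ S₂ ∧ t.2 v₂ ≠ 0) := fun t ht => by
    simpa [A, B] using mem_product.mp (hMAB ht)
  have hS₁ : ∀ f ∈ S₁, f ≠ 0 := fun f hf h => h₁.1 (h ▸ hf)
  have hS₂ : ∀ g ∈ S₂, g ≠ 0 := fun g hg h => h₂.1 (h ▸ hg)
  have hZ₁ : 0 ∉ Z₁ := fun h => hS₁ 0 (mem_filter.mp h).1 rfl
  refine ⟨(glue M Z₁ Z₂).map (dualProdDualEquivDual _ _ _).toEquiv.toEmbedding, ?_, ?_, ?_⟩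
  · have hglue : #(glue M Z₁ Z₂) = #M + #Z₁ + #Z₂ :=
      card_glue (fun t ht => hS₁ _ (hM t ht).1.1) (fun t ht => hS₂ _ (hM t ht).2.1) hZ₁
    have hZA : #Z₁ + #A = #S₁ := card_filter_add_card_filter_not _
    have hZB : #Z₂ + #B = #S₂ := card_filter_add_card_filter_not _
    have hA : #A ≤ 2 := h₁.2 v₁ hv₁
    have hB : #B ≤ 2 := h₂.2 v₂ hv₂
    rw [card_map, hglue, hMcard]
    omega
  · rw [forall_mem_map]
    rintro ⟨f, g⟩ ht
    change f v₁ + g v₂ = 0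
    rcases mem_glue.mp ht with hfg | ⟨hf, rfl⟩ | ⟨rfl, hg⟩
    · exact zmod_two_add_eq_zero (hM _ hfg).1.2 (hM _ hfg).2.2
    · simp [(mem_filter.mp hf).2]
    · simp [(mem_filter.mp hg).2]
  · refine missesAtMostTwo_map_dualProdDualEquivDual
      (zero_notMem_glue (fun t ht => hS₁ _ (hM t ht).1.1) hZ₁
        fun h => hS₂ 0 (mem_filter.mp h).1 rfl) (fun x hx => ?_) (fun y hy => ?_)
    · refine (card_filter_fst_glue_le (D₁ := Z₁) (P := fun f => f x ≠ 0) (by simp) hM₁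
        (fun t ht => (hM t ht).1.1) (fun t ht hZ => (hM t ht).1.2 (mem_filter.mp hZ).2)
        (filter_subset _ _)).trans (h₁.2 x hx)
    · refine (card_filter_snd_glue_le (D₂ := Z₂) (P := fun g => g y ≠ 0) (by simp) hM₂
        (fun t ht => (hM t ht).2.1) (fun t ht hZ => (hM t ht).2.2 (mem_filter.mp hZ).2)
        (filter_subset _ _)).trans (h₂.2 y hy)

end ZModTwo

theorem two_sum_hyperplanes_general {V₁ V₂ : Type} [AddCommGroup V₁] [Module (ZMod 2) V₁]
    [AddCommGroup V₂] [Module (ZMod 2) V₂]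
    [FiniteDimensional (ZMod 2) V₁] [FiniteDimensional (ZMod 2) V₂]
    (E₁ : Finset V₁) (E₂ : Finset V₂) (v₁ : V₁) (v₂ : V₂)
    (hv₁E : v₁ ∈ E₁) (hv₂E : v₂ ∈ E₂)
    (n₁ n₂ : ℕ)
    (hU₁ : ∃ U : Fin n₁ → Submodule (ZMod 2) V₁, Function.Injective U ∧
      (∀ k, Module.finrank (ZMod 2) (U k) + 1 = Module.finrank (ZMod 2) V₁) ∧
      ∀ x ∈ E₁, n₁ ≤ (Finset.univ.filter fun k => x ∈ U k).card + 2)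
    (hU₂ : ∃ U : Fin n₂ → Submodule (ZMod 2) V₂, Function.Injective U ∧
      (∀ k, Module.finrank (ZMod 2) (U k) + 1 = Module.finrank (ZMod 2) V₂) ∧
      ∀ y ∈ E₂, n₂ ≤ (Finset.univ.filter fun k => y ∈ U k).card + 2)
    (E : Set ((V₁ × V₂) ⧸ Submodule.span (ZMod 2) ({(v₁, v₂)} : Set (V₁ × V₂))))
    (hE : E = (fun x : V₁ => Submodule.Quotient.mk ((x, 0) : V₁ × V₂)) '' (↑E₁ \ {v₁}) ∪
      (fun y : V₂ => Submodule.Quotient.mk ((0, y) : V₁ × V₂)) '' (↑E₂ \ {v₂})) :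
    ∃ U : Fin (n₁ + n₂ - 2) → Submodule (ZMod 2)
        ((V₁ × V₂) ⧸ Submodule.span (ZMod 2) ({(v₁, v₂)} : Set (V₁ × V₂))),
      Function.Injective U ∧
      (∀ k, Module.finrank (ZMod 2) (U k) + 1 =
        Module.finrank (ZMod 2)
          ((V₁ × V₂) ⧸ Submodule.span (ZMod 2) ({(v₁, v₂)} : Set (V₁ × V₂)))) ∧
      ∀ x ∈ E, n₁ + n₂ ≤ (Finset.univ.filter fun k => x ∈ U k).card + 4 := by
  subst hE
  obtain ⟨S₁, rfl, hS₁⟩ := (exists_hyperplanes_iff_exists_missesAtMostTwo (E₁ : Set V₁) n₁).mp hU₁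
  obtain ⟨S₂, rfl, hS₂⟩ := (exists_hyperplanes_iff_exists_missesAtMostTwo (E₂ : Set V₂) n₂).mp hU₂
  obtain ⟨T, hTcard, hTv, hT⟩ := exists_missesAtMostTwo_prod hS₁ hS₂ hv₁E hv₂E
  obtain ⟨S, hScard, hS⟩ := exists_missesAtMostTwo_quotient (Submodule.span (ZMod 2) {(v₁, v₂)})
    hT fun φ hφ => by simpa [← SetLike.mem_coe] using LinearMap.mem_ker.mpr (hTv φ hφ)
  obtain ⟨S', hS'S, hS'card⟩ := exists_subset_card_eq (s := S) (n := #S₁ + #S₂ - 2) (by omega)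
  obtain ⟨U, hU, hrank, hcover⟩ := (exists_hyperplanes_iff_exists_missesAtMostTwo _ _).mpr
    ⟨S', hS'card, hS.mono hS'S subset_rfl⟩
  refine ⟨U, hU, hrank, fun x hx => ?_⟩
  have := hcover x <| by
    rw [Set.image_union, Set.image_image, Set.image_image]
    exact Set.union_subset_union (Set.image_mono Set.sdiff_subset)
      (Set.image_mono Set.sdiff_subset) hx
  omega

/-- The `k = 2` case of Lemma 4.9 of the paper: if for `k = 1, 2` there are `n_k ≥ 2`
pairwise distinct codimension-one subspaces of `V_k` such that every element of `E_k` lies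
in at least `n_k − 2` of them, then the 2-sum at nonzero vectors `v₁ ∈ E₁`, `v₂ ∈ E₂`
admits `n₁ + n₂ − 2` pairwise distinct codimension-one subspaces such that every element
of the glued ground set lies in at least `n₁ + n₂ − 4` of them. -/
theorem two_sum_hyperplanes {V₁ V₂ : Type} [AddCommGroup V₁] [Module (ZMod 2) V₁]
    [AddCommGroup V₂] [Module (ZMod 2) V₂]
    [FiniteDimensional (ZMod 2) V₁] [FiniteDimensional (ZMod 2) V₂]
    [Nontrivial V₁] [Nontrivial V₂]
    (E₁ : Finset V₁) (E₂ : Finset V₂) (v₁ : V₁) (v₂ : V₂)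
    (hv₁E : v₁ ∈ E₁) (hv₂E : v₂ ∈ E₂) (hv₁ : v₁ ≠ 0) (hv₂ : v₂ ≠ 0)
    (n₁ n₂ : ℕ) (hn₁ : 2 ≤ n₁) (hn₂ : 2 ≤ n₂)
    (hU₁ : ∃ U : Fin n₁ → Submodule (ZMod 2) V₁, Function.Injective U ∧
      (∀ k, Module.finrank (ZMod 2) (U k) + 1 = Module.finrank (ZMod 2) V₁) ∧
      ∀ x ∈ E₁, n₁ ≤ (Finset.univ.filter fun k => x ∈ U k).card + 2)
    (hU₂ : ∃ U : Fin n₂ → Submodule (ZMod 2) V₂, Function.Injective U ∧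
      (∀ k, Module.finrank (ZMod 2) (U k) + 1 = Module.finrank (ZMod 2) V₂) ∧
      ∀ y ∈ E₂, n₂ ≤ (Finset.univ.filter fun k => y ∈ U k).card + 2)
    (E : Set ((V₁ × V₂) ⧸ Submodule.span (ZMod 2) ({(v₁, v₂)} : Set (V₁ × V₂))))
    (hE : E = (fun x : V₁ => Submodule.Quotient.mk ((x, 0) : V₁ × V₂)) '' (↑E₁ \ {v₁}) ∪
      (fun y : V₂ => Submodule.Quotient.mk ((0, y) : V₁ × V₂)) '' (↑E₂ \ {v₂})) :
    ∃ U : Fin (n₁ + n₂ - 2) → Submodule (ZMod 2)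
        ((V₁ × V₂) ⧸ Submodule.span (ZMod 2) ({(v₁, v₂)} : Set (V₁ × V₂))),
      Function.Injective U ∧
      (∀ k, Module.finrank (ZMod 2) (U k) + 1 =
        Module.finrank (ZMod 2)
          ((V₁ × V₂) ⧸ Submodule.span (ZMod 2) ({(v₁, v₂)} : Set (V₁ × V₂)))) ∧
      ∀ x ∈ E, n₁ + n₂ ≤ (Finset.univ.filter fun k => x ∈ U k).card + 4 :=
  two_sum_hyperplanes_general E₁ E₂ v₁ v₂ hv₁E hv₂E n₁ n₂ hU₁ hU₂ E hE
end

section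
/- Let h_1, …, h_{10} ∈ (ZMod 2)^5 be the ten R_{10}-vectors. Then there exist five pairwise distinct 4-dimensional (ZMod 2)-linear subspaces U_1, …, U_5 of (ZMod 2)^5 such that each vector h_i (1 ≤ i ≤ 10) lies in at least three of the subspaces U_1, …, U_5. -/
attribute [local instance] Classical.propDecidable

def φaux (k : Fin 5) : (Fin 5 → ZMod 2) →ₗ[ZMod 2] ZMod 2 :=
  (LinearMap.proj k : (Fin 5 → ZMod 2) →ₗ[ZMod 2] ZMod 2) + LinearMap.proj (k + 1)

lemma mem_ker_iff (k : Fin 5) (v : Fin 5 → ZMod 2) :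
    v ∈ LinearMap.ker (φaux k) ↔ v k + v (k + 1) = 0 := by
  simp [φaux, LinearMap.mem_ker]

lemma phi_surj (k : Fin 5) : Function.Surjective (φaux k) := by
  intro c
  refine ⟨c • Pi.single (k + 1) 1, ?_⟩
  have hk : (k : Fin 5) ≠ k + 1 := by revert k; decide
  simp [φaux, Pi.single_apply, hk]

lemma finrank_ker (k : Fin 5) : Module.finrank (ZMod 2) (LinearMap.ker (φaux k)) = 4 := by
  have h := LinearMap.finrank_range_add_finrank_ker (φaux k)
  rw [LinearMap.range_eq_top.mpr (phi_surj k)] at h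
  simp only [finrank_top, Module.finrank_self] at h
  have h5 : Module.finrank (ZMod 2) (Fin 5 → ZMod 2) = 5 := by
    simp [Module.finrank_pi]
  omega

/-- The sporadic case of Lemma 4.8 of the paper: there are five pairwise distinct
4-dimensional (i.e. codimension-one) subspaces of `(ZMod 2)^5` such that each of the ten
`R₁₀`-vectors lies in at least three of them. -/
theorem sporadic_hyperplanes :
    ∃ U : Fin 5 → Submodule (ZMod 2) (Fin 5 → ZMod 2),
      Function.Injective U ∧ (∀ k, Module.finrank (ZMod 2) (U k) = 4) ∧
        ∀ i : Fin 5 ⊕ Fin 5, 3 ≤ (Finset.univ.filter fun k => R10 i ∈ U k).card := by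
  refine ⟨fun k => LinearMap.ker (φaux k), ?_, finrank_ker, ?_⟩
  · have key : ∀ k l : Fin 5, k ≠ l → ∃ v : Fin 5 → ZMod 2,
        v k + v (k + 1) = 0 ∧ v l + v (l + 1) ≠ 0 := by decide
    intro k l h
    by_contra hne
    obtain ⟨v, hv0, hv1⟩ := key k l hne
    have hm : v ∈ LinearMap.ker (φaux l) := by
      have := (mem_ker_iff k v).mpr hv0
      simpa only [h] using this
    exact hv1 ((mem_ker_iff l v).mp hm)
  · intro i
    have heq : (Finset.univ.filter fun k => R10 i ∈ LinearMap.ker (φaux k)) =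
        (Finset.univ.filter fun k : Fin 5 => decide (R10 i k + R10 i (k + 1) = 0) = true) := by
      ext k
      simp only [Finset.mem_filter, mem_ker_iff, decide_eq_true_eq]
    rw [heq]
    have card3 : ∀ i, 3 ≤ (Finset.univ.filter
        fun k : Fin 5 => decide (R10 i k + R10 i (k + 1) = 0) = true).card := by decide
    exact card3 i
end
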